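/- arXiv:2411.10107 — 13 statements merged into one kernel-verified Lean document; each statement's English description precedes it below -/
import Mathlib

section
/- Let f be a violation-free DMAC instance with unit displacements on the grid G = {1,…,n}^d. If x and y are fixed points of f with y ≤ x and ‖x − y‖∞ > 1, then there exists a fixed point z of f with y ≤ z ≤ x, ‖z − y‖∞ < ‖x − y‖∞, and ‖x − z‖∞ < ‖x − y‖∞. -/
/-- Membership in the grid `{1, …, n}^d ⊆ ℤ^d`. -/
def inGrid (n : ℕ) {d : ℕ} (x : Fin d → ℤ) : Prop :=
  ∀ i, 1 ≤ x i ∧ x i ≤ (n : ℤ)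

/-- The ℓ∞ distance `‖x − y‖∞ = max_i |x_i − y_i|` (as a natural number). -/
def linf {d : ℕ} (x y : Fin d → ℤ) : ℕ :=
  Finset.univ.sup fun i => (x i - y i).natAbs

lemma linf_le_iff {d : ℕ} {x y : Fin d → ℤ} {k : ℕ} :
    linf x y ≤ k ↔ ∀ i, (x i - y i).natAbs ≤ k := by
  simp [linf, Finset.sup_le_iff]

lemma le_linf {d : ℕ} (x y : Fin d → ℤ) (i : Fin d) :
    (x i - y i).natAbs ≤ linf x y :=
  Finset.le_sup (f := fun i => (x i - y i).natAbs) (Finset.mem_univ i)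

/-- If `x` and `y` are fixed points of a violation-free DMAC instance with
unit displacements, `y ≤ x` and `‖x − y‖∞ > 1`, then there is a fixed point
`z` with `y ≤ z ≤ x` that is strictly closer to both `x` and `y`. -/
theorem fixed_point_between (d n : ℕ) (hn : 1 ≤ n)
    (f : (Fin d → ℤ) → (Fin d → ℤ))
    (hrange : ∀ x, inGrid n x → inGrid n (f x))
    (hmono : ∀ x y, inGrid n x → inGrid n y → x ≤ y → f x ≤ f y)
    (hnonexp : ∀ x y, inGrid n x → inGrid n y → linf (f x) (f y) ≤ linf x y)
    (hunit : ∀ x, inGrid n x → linf (f x) x ≤ 1)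
    (x y : Fin d → ℤ)
    (hxG : inGrid n x) (hyG : inGrid n y)
    (hfx : f x = x) (hfy : f y = y)
    (hyx : y ≤ x) (hdist : 1 < linf x y) :
    ∃ z, inGrid n z ∧ f z = z ∧ y ≤ z ∧ z ≤ x ∧
      linf z y < linf x y ∧ linf x z < linf x y := by
  -- anything sandwiched between y and x is in the grid
  have sandwich : ∀ z : Fin d → ℤ, y ≤ z → z ≤ x → inGrid n z := by
    intro z h1 h2 i
    exact ⟨le_trans (hyG i).1 (h1 i), le_trans (h2 i) (hxG i).2⟩
  -- the key iteration lemma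
  have key : ∀ N : ℕ, ∀ z : Fin d → ℤ, y ≤ z → z ≤ x →
      linf z y ≤ 1 → linf x z ≤ linf x y - 1 → z ≤ f z →
      (∑ i, (x i - z i).natAbs) ≤ N →
      ∃ w, f w = w ∧ y ≤ w ∧ w ≤ x ∧ linf w y ≤ 1 ∧ linf x w ≤ linf x y - 1 := by
    intro N
    induction N with
    | zero =>
      intro z hyz hzx h1 h2 hzfz hsum
      have hzx' : z = x := by
        funext i
        have hle : (x i - z i).natAbs ≤ ∑ j, (x j - z j).natAbs := by
          simpa using Finset.single_le_sum (f := fun j => (x j - z j).natAbs)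
            (fun j _ => Nat.zero_le _) (Finset.mem_univ i)
        have hzxi := hzx i
        omega
      refine ⟨x, hfx, hyx, le_refl _, ?_, ?_⟩
      · rw [← hzx']; exact h1
      · rw [linf_le_iff]; intro i; simp
    | succ N ih =>
      intro z hyz hzx h1 h2 hzfz hsum
      by_cases hfz : f z = z
      · exact ⟨z, hfz, hyz, hzx, h1, h2⟩
      · have hzG : inGrid n z := sandwich z hyz hzx
        have hyfz : y ≤ f z := by
          have h := hmono y z hyG hzG hyz
          rwa [hfy] at h
        have hfzx : f z ≤ x := by
          have h := hmono z x hzG hxG hzx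
          rwa [hfx] at h
        have hfzG : inGrid n (f z) := sandwich _ hyfz hfzx
        have h1' : linf (f z) y ≤ 1 := by
          have h := hnonexp z y hzG hyG
          rw [hfy] at h
          exact h.trans h1
        have h2' : linf x (f z) ≤ linf x y - 1 := by
          have h := hnonexp x z hxG hzG
          rw [hfx] at h
          exact h.trans h2
        have hffz : f z ≤ f (f z) := hmono z (f z) hzG hfzG hzfz
        -- the sum strictly decreases
        obtain ⟨i, hi⟩ : ∃ i, z i < f z i := by
          by_contra h
          push_neg at h
          exact hfz (le_antisymm h hzfz)
        have hlt : (∑ i, (x i - f z i).natAbs) < ∑ i, (x i - z i).natAbs := by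
          apply Finset.sum_lt_sum
          · intro j _
            show (x j - f z j).natAbs ≤ (x j - z j).natAbs
            have ha : z j ≤ f z j := hzfz j
            have hb : f z j ≤ x j := hfzx j
            have hc : z j ≤ x j := hzx j
            omega
          · refine ⟨i, Finset.mem_univ i, ?_⟩
            show (x i - f z i).natAbs < (x i - z i).natAbs
            have hb : f z i ≤ x i := hfzx i
            have hc : z i ≤ x i := hzx i
            omega
        exact ih (f z) hyfz hfzx h1' h2' hffz (by omega)
  -- the starting point
  have hD2 : 2 ≤ linf x y := hdist
  set b : Fin d → ℤ := fun i => max (y i) (x i - ((linf x y : ℤ) - 1)) with hb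
  have hxyD : ∀ i, (x i - y i).natAbs ≤ linf x y := fun i => le_linf x y i
  have hyb : y ≤ b := fun i => le_max_left _ _
  have hbx : b ≤ x := by
    intro i
    simp only [hb]
    have h : y i ≤ x i := hyx i
    apply max_le h
    omega
  have hby : linf b y ≤ 1 := by
    rw [linf_le_iff]
    intro i
    simp only [hb]
    have hxy := hxyD i
    have h0 : y i ≤ x i := hyx i
    rcases max_cases (y i) (x i - ((linf x y : ℤ) - 1)) with ⟨h, h'⟩ | ⟨h, h'⟩ <;>
      rw [h] <;> omega
  have hxb : linf x b ≤ linf x y - 1 := by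
    rw [linf_le_iff]
    intro i
    simp only [hb]
    have hxy := hxyD i
    have h0 : y i ≤ x i := hyx i
    rcases max_cases (y i) (x i - ((linf x y : ℤ) - 1)) with ⟨h, h'⟩ | ⟨h, h'⟩ <;>
      rw [h] <;> omega
  have hbG : inGrid n b := sandwich b hyb hbx
  have hbfb : b ≤ f b := by
    have hyfb : y ≤ f b := by
      have h := hmono y b hyG hbG hyb
      rwa [hfy] at h
    have hxfb : linf x (f b) ≤ linf x y - 1 := by
      have h := hnonexp x b hxG hbG
      rw [hfx] at h
      exact h.trans hxb
    intro i
    simp only [hb]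
    have h1 : y i ≤ f b i := hyfb i
    have h2 : (x i - f b i).natAbs ≤ linf x y - 1 := (le_linf x (f b) i).trans hxfb
    have h3 : f b i ≤ x i := by
      have h := hmono b x hbG hxG hbx
      rw [hfx] at h
      exact h i
    apply max_le h1
    omega
  obtain ⟨w, hfw, hyw, hwx, hw1, hw2⟩ :=
    key (∑ i, (x i - b i).natAbs) b hyb hbx hby hxb hbfb (le_refl _)
  exact ⟨w, sandwich w hyw hwx, hfw, hyw, hwx,
    lt_of_le_of_lt hw1 hdist, by omega⟩
end

section
/- Let f be a violation-free DMAC instance with unit displacements on the grid G = {1,…,n}^d. If x is a fixed point of f and there exists a fixed point w of f with w ≤ x and w ≠ x (i.e., x is not the least fixed point of f), then there exists a fixed point z of f with z ≠ x, z ≤ x, and ‖x − z‖∞ ≤ 1. -/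
lemma linf_coord {d : ℕ} {x y : Fin d → ℤ} {c : ℕ} (h : linf x y ≤ c) (i : Fin d) :
    (x i - y i).natAbs ≤ c := by
  have h1 : (x i - y i).natAbs ≤ linf x y :=
    Finset.le_sup (f := fun j => (x j - y j).natAbs) (Finset.mem_univ i)
  omega

lemma linf_le {d : ℕ} {x y : Fin d → ℤ} {c : ℕ} (h : ∀ i, (x i - y i).natAbs ≤ c) :
    linf x y ≤ c := Finset.sup_le fun i _ => h i

/-- Climbing lemma: if `q ≤ f q` and `q ≤ x` with `x` a fixed point, iterating `f`
from `q` reaches a fixed point in `[q, x]`, preserving any predicate `P`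
preserved by `f` on the grid. -/
lemma climb (d n : ℕ) (f : (Fin d → ℤ) → (Fin d → ℤ))
    (hrange : ∀ x, inGrid n x → inGrid n (f x))
    (hmono : ∀ x y, inGrid n x → inGrid n y → x ≤ y → f x ≤ f y)
    (x : Fin d → ℤ) (hxG : inGrid n x) (hfx : f x = x)
    (P : (Fin d → ℤ) → Prop) (hPstep : ∀ y, inGrid n y → P y → P (f y))
    (q : Fin d → ℤ) (hqG : inGrid n q) (hqx : q ≤ x) (hq : q ≤ f q) (hPq : P q) :
    ∃ z, inGrid n z ∧ f z = z ∧ q ≤ z ∧ z ≤ x ∧ P z := by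
  set a : ℕ → (Fin d → ℤ) := fun t => f^[t] q with ha
  have hsucc : ∀ t, a (t + 1) = f (a t) := fun t => Function.iterate_succ_apply' f t q
  have inv : ∀ t, inGrid n (a t) ∧ a t ≤ a (t + 1) ∧ a t ≤ x ∧ P (a t) := by
    intro t
    induction t with
    | zero =>
      refine ⟨hqG, ?_, hqx, hPq⟩
      have h1 : a 1 = f q := hsucc 0
      have h0 : a 0 = q := rfl
      rw [h1, h0]; exact hq
    | succ t ih =>
      obtain ⟨hG, hle, hx, hP⟩ := ih
      have hG' : inGrid n (a (t + 1)) := by rw [hsucc]; exact hrange _ hG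
      refine ⟨hG', ?_, ?_, ?_⟩
      · rw [hsucc t, hsucc (t + 1)]
        exact hmono _ _ hG hG' hle
      · rw [hsucc]
        calc f (a t) ≤ f x := hmono _ _ hG hxG hx
        _ = x := hfx
      · rw [hsucc]; exact hPstep _ hG hP
  have amono : ∀ t, a 0 ≤ a t := by
    intro t
    induction t with
    | zero => exact le_refl _
    | succ t ih => exact le_trans ih (inv t).2.1
  by_cases hstop : ∃ t, a (t + 1) = a t
  · obtain ⟨t, ht⟩ := hstop
    refine ⟨a t, (inv t).1, ?_, amono t, (inv t).2.2.1, (inv t).2.2.2⟩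
    rw [← hsucc]; exact ht
  · exfalso
    push_neg at hstop
    set s : ℕ → ℤ := fun t => ∑ i, a t i with hs
    have hlt : ∀ t, s t < s (t + 1) := by
      intro t
      have hne : ∃ i, a t i ≠ a (t + 1) i := by
        by_contra hc
        push_neg at hc
        exact hstop t (funext fun i => (hc i).symm)
      obtain ⟨i, hi⟩ := hne
      refine Finset.sum_lt_sum (fun j _ => (inv t).2.1 j) ⟨i, Finset.mem_univ i, ?_⟩
      exact lt_of_le_of_ne ((inv t).2.1 i) hi
    have hub : ∀ t, s t ≤ ∑ i, x i := fun t => Finset.sum_le_sum fun i _ => (inv t).2.2.1 i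
    have hgrow : ∀ t : ℕ, s 0 + t ≤ s t := by
      intro t
      induction t with
      | zero => simp
      | succ t ih =>
        have := hlt t
        push_cast
        push_cast at ih
        omega
    have h1 := hgrow ((∑ i, x i - s 0).toNat + 1)
    have h2 := hub ((∑ i, x i - s 0).toNat + 1)
    have h3 : (0 : ℤ) ≤ ∑ i, x i - s 0 := by have := hub 0; omega
    push_cast at h1
    omega

/-- If `x` is a fixed point of a violation-free DMAC instance with unit
displacements, and `x` is not the least fixed point (there is a fixed point
`w ≤ x`, `w ≠ x`), then there is a fixed point `z ≠ x` with `z ≤ x` and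
`‖x − z‖∞ ≤ 1`. -/
theorem neighboring_lesser_fixed_point (d n : ℕ) (hn : 1 ≤ n)
    (f : (Fin d → ℤ) → (Fin d → ℤ))
    (hrange : ∀ x, inGrid n x → inGrid n (f x))
    (hmono : ∀ x y, inGrid n x → inGrid n y → x ≤ y → f x ≤ f y)
    (hnonexp : ∀ x y, inGrid n x → inGrid n y → linf (f x) (f y) ≤ linf x y)
    (hunit : ∀ x, inGrid n x → linf (f x) x ≤ 1)
    (x : Fin d → ℤ) (hxG : inGrid n x) (hfx : f x = x)
    (w : Fin d → ℤ) (hwG : inGrid n w) (hfw : f w = w)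
    (hwx : w ≤ x) (hwne : w ≠ x) :
    ∃ z, inGrid n z ∧ f z = z ∧ z ≠ x ∧ z ≤ x ∧ linf x z ≤ 1 := by
  have main : ∀ k : ℕ, ∀ w : Fin d → ℤ, inGrid n w → f w = w → w ≤ x → w ≠ x →
      linf x w ≤ k → ∃ z, inGrid n z ∧ f z = z ∧ z ≠ x ∧ z ≤ x ∧ linf x z ≤ 1 := by
    intro k
    induction k using Nat.strong_induction_on with
    | _ k ih =>
      intro w hwG hfw hwx hwne hlin
      by_cases h1 : linf x w ≤ 1
      · exact ⟨w, hwG, hfw, hwne, hwx, h1⟩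
      · have hm2 : 2 ≤ linf x w := by omega
        obtain ⟨m', hm'⟩ : ∃ m', linf x w = m' + 1 := ⟨linf x w - 1, by omega⟩
        have hm1 : 1 ≤ m' := by omega
        have hDle : ∀ i, (x i - w i).natAbs ≤ m' + 1 := fun i => hm' ▸ linf_coord (le_refl _) i
        obtain ⟨q, hqi⟩ : ∃ q : Fin d → ℤ, ∀ i, q i = max (w i) (x i - (m' : ℤ)) :=
          ⟨_, fun _ => rfl⟩
        have hwq : w ≤ q := fun i => by rw [hqi i]; exact le_max_left _ _
        have hqx : q ≤ x := by
          intro i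
          rw [hqi i]
          have h := hwx i
          refine max_le h ?_
          show x i - (m' : ℤ) ≤ x i
          omega
        have hqG : inGrid n q := fun i =>
          ⟨le_trans (hwG i).1 (hwq i), le_trans (hqx i) (hxG i).2⟩
        have hqlow : ∀ i, x i - (m' : ℤ) ≤ q i := fun i => by
          rw [hqi i]; exact le_max_right _ _
        have hxq1 : linf x q ≤ m' := by
          apply linf_le
          intro i
          have h2 : x i - (m' : ℤ) ≤ q i := hqlow i
          have h3 : q i ≤ x i := hqx i
          omega
        have hqw1 : linf q w ≤ 1 := by
          apply linf_le
          intro i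
          have hD : (x i - w i).natAbs ≤ m' + 1 := hDle i
          have h : w i ≤ x i := hwx i
          have h3 : w i ≤ q i := hwq i
          have h4 : q i ≤ w i + 1 := by
            rw [hqi i]
            exact max_le (by omega) (by omega)
          omega
        have hqfq : q ≤ f q := by
          have h5 : w ≤ f q := by
            have := hmono w q hwG hqG hwq
            rwa [hfw] at this
          have h6 : linf x (f q) ≤ m' := by
            have := hnonexp x q hxG hqG
            rw [hfx] at this
            exact le_trans this hxq1
          intro i
          rw [hqi i]
          have h7 : (x i - f q i).natAbs ≤ m' := linf_coord h6 i
          have h8 : w i ≤ f q i := h5 i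
          refine max_le h8 ?_
          show x i - (m' : ℤ) ≤ f q i
          omega
        obtain ⟨z, hzG, hfz, hqz, hzx, hzw⟩ :=
          climb d n f hrange hmono x hxG hfx (fun y => linf y w ≤ 1)
            (fun y hyG hy => by
              have := hnonexp y w hyG hwG
              rw [hfw] at this
              exact le_trans this hy)
            q hqG hqx hqfq hqw1
        have hxz : linf x z ≤ m' := by
          apply linf_le
          intro i
          have h2 : x i - (m' : ℤ) ≤ q i := hqlow i
          have h3 : q i ≤ z i := hqz i
          have h4 : z i ≤ x i := hzx i
          omega
        have hne : (Finset.univ : Finset (Fin d)).Nonempty := by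
          rcases (Finset.univ : Finset (Fin d)).eq_empty_or_nonempty with h | h
          · exfalso
            have hz : linf x w = 0 := by unfold linf; rw [h]; simp
            omega
          · exact h
        obtain ⟨i, _, hi⟩ := Finset.exists_mem_eq_sup Finset.univ hne
          (fun i => (x i - w i).natAbs)
        have hiD : (x i - w i).natAbs = m' + 1 := by
          rw [← hm']; exact hi.symm
        have hzi : z i < x i := by
          have h2 : (z i - w i).natAbs ≤ 1 := linf_coord hzw i
          have h3 : w i ≤ x i := hwx i
          omega
        have hzne : z ≠ x := by
          intro h
          rw [h] at hzi
          exact lt_irrefl _ hzi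
        have hlt : m' < k := by omega
        exact ih m' hlt z hzG hfz hzx hzne hxz
  exact main (linf x w) w hwG hfw hwx hwne (le_refl _)
end

section
/- Let f be a violation-free DMAC instance with unit displacements on the grid G = {1,…,n}^d, let 0 ≤ i ≤ d, and let x ∈ G be an i-fixed point. Let j be a coordinate with j > i and let ε ∈ {−1, +1} be such that x + ε·e_j ∈ G. Then there exists an i-fixed point y ∈ G with y_j = x_j + ε, y_k = x_k for every coordinate k > i with k ≠ j, and ‖y − x‖∞ = 1. -/
/-- If `x` is an `i`-fixed point of a violation-free DMAC instance with unit
displacements, `j` is a coordinate with `j > i`, `ε ∈ {−1, +1}`, and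
`x + ε·e_j` lies in the grid, then the neighbouring `i`-slice (through
`x + ε·e_j`) contains an `i`-fixed point `y` with `‖y − x‖∞ = 1`. -/
theorem neighboring_slice_iFixedPoint (d n : ℕ) (hn : 1 ≤ n)
    (f : (Fin d → ℤ) → (Fin d → ℤ))
    (hrange : ∀ x, inGrid n x → inGrid n (f x))
    (hmono : ∀ x y, inGrid n x → inGrid n y → x ≤ y → f x ≤ f y)
    (hnonexp : ∀ x y, inGrid n x → inGrid n y → linf (f x) (f y) ≤ linf x y)
    (hunit : ∀ x, inGrid n x → linf (f x) x ≤ 1)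
    (i : ℕ) (hi : i ≤ d)
    (x : Fin d → ℤ) (hxG : inGrid n x)
    (hxfix : ∀ j : Fin d, (j : ℕ) < i → f x j = x j)
    (j : Fin d) (hj : i ≤ (j : ℕ))
    (ε : ℤ) (hε : ε = 1 ∨ ε = -1)
    (hx' : inGrid n (Function.update x j (x j + ε))) :
    ∃ y : Fin d → ℤ, inGrid n y ∧
      (∀ k : Fin d, (k : ℕ) < i → f y k = y k) ∧
      y j = x j + ε ∧
      (∀ k : Fin d, i ≤ (k : ℕ) → k ≠ j → y k = x k) ∧
      linf y x = 1 := by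
  classical
  set x' : Fin d → ℤ := Function.update x j (x j + ε) with hx'def
  have hxx' : ∀ k : Fin d, (x' k - x k).natAbs ≤ 1 := by
    intro k
    by_cases hk : k = j
    · subst hk
      simp only [hx'def, Function.update_self]
      rcases hε with h | h <;> simp [h]
    · simp [hx'def, Function.update_of_ne hk]
  -- the slice operator
  set T : (Fin d → ℤ) → (Fin d → ℤ) := fun z k => if (k : ℕ) < i then f z k else z k
    with hTdef
  -- the invariant region
  set P : (Fin d → ℤ) → Prop :=
    fun z => inGrid n z ∧ (∀ k : Fin d, i ≤ (k : ℕ) → z k = x' k) ∧ linf z x ≤ 1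
    with hPdef
  have hterm : ∀ (z w : Fin d → ℤ) (k : Fin d), (z k - w k).natAbs ≤ linf z w :=
    fun z w k => by rw [linf]; exact Finset.le_sup (f := fun i => (z i - w i).natAbs) (Finset.mem_univ k)
  have hTP : ∀ z, P z → P (T z) := by
    intro z hz
    obtain ⟨hzG, hzslice, hzd⟩ := hz
    refine ⟨?_, ?_, ?_⟩
    · intro k
      by_cases hk : (k : ℕ) < i
      · simpa [hTdef, hk] using hrange z hzG k
      · simpa [hTdef, hk] using hzG k
    · intro k hk
      have : ¬ (k : ℕ) < i := by omega
      simpa [hTdef, this] using hzslice k hk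
    · rw [linf]
      apply Finset.sup_le
      intro k _
      by_cases hk : (k : ℕ) < i
      · have h1 : (f z k - f x k).natAbs ≤ linf (f z) (f x) := hterm _ _ k
        have h2 : linf (f z) (f x) ≤ linf z x := hnonexp z x hzG hxG
        have h3 : f x k = x k := hxfix k hk
        simp only [hTdef]
        rw [if_pos hk]
        rw [h3] at h1
        omega
      · have := hterm z x k
        simp only [hTdef]
        rw [if_neg hk]
        omega
  have hTmono : ∀ z w, inGrid n z → inGrid n w → z ≤ w → T z ≤ T w := by
    intro z w hzG hwG hzw k
    by_cases hk : (k : ℕ) < i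
    · simpa [hTdef, hk] using hmono z w hzG hwG hzw k
    · simpa [hTdef, hk] using hzw k
  -- strict decrease of the potential
  have hdec : ∀ z, P z → T z ≤ z → T z ≠ z →
      (∑ k, (T z k - 1).toNat) < ∑ k, (z k - 1).toNat := by
    intro z hz hle hne
    obtain ⟨k, hk⟩ := Function.ne_iff.mp hne
    have hTzG : inGrid n (T z) := (hTP z hz).1
    refine Finset.sum_lt_sum (fun m _ => ?_) ⟨k, Finset.mem_univ k, ?_⟩
    · have h : T z m ≤ z m := hle m
      omega
    · have h1 : T z k ≤ z k := hle k
      have h2 := (hTzG k).1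
      omega
  -- descend to a fixed point
  have key : ∀ N : ℕ, ∀ z, P z → T z ≤ z → (∑ k, (z k - 1).toNat) < N →
      ∃ y, P y ∧ ∀ k : Fin d, (k : ℕ) < i → f y k = y k := by
    intro N
    induction N with
    | zero => intro z _ _ h; exact absurd h (Nat.not_lt_zero _)
    | succ N ih =>
      intro z hz hle hm
      by_cases h : T z = z
      · refine ⟨z, hz, fun k hk => ?_⟩
        have := congrFun h k
        simpa [hTdef, hk] using this
      · refine ih (T z) (hTP z hz) (hTmono (T z) z (hTP z hz).1 hz.1 hle) ?_
        have := hdec z hz hle h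
        omega
  -- the top element of the region
  set m : Fin d → ℤ := fun k => if (k : ℕ) < i then min (n : ℤ) (x k + 1) else x' k
    with hmdef
  have hPm : P m := by
    refine ⟨?_, ?_, ?_⟩
    · intro k
      by_cases hk : (k : ℕ) < i
      · have h1 := (hxG k).1
        have h2 : (1 : ℤ) ≤ (n : ℤ) := by exact_mod_cast hn
        simp only [hmdef, if_pos hk]
        constructor
        · exact le_min h2 (by omega)
        · exact min_le_left _ _
      · simpa [hmdef, hk] using hx' k
    · intro k hk
      have : ¬ (k : ℕ) < i := by omega
      simp [hmdef, this]
    · rw [linf]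
      apply Finset.sup_le
      intro k _
      by_cases hk : (k : ℕ) < i
      · have h1 := (hxG k).1
        have h2 := (hxG k).2
        simp only [hmdef, if_pos hk]
        rcases le_total ((n : ℤ)) (x k + 1) with h | h
        · rw [min_eq_left h]; omega
        · rw [min_eq_right h]; omega
      · simpa [hmdef, hk] using hxx' k
  have hTm : T m ≤ m := by
    intro k
    by_cases hk : (k : ℕ) < i
    · have hTmP := hTP m hPm
      have h1 : (T m k - x k).natAbs ≤ 1 := le_trans (hterm _ _ k) hTmP.2.2
      have h2 := (hTmP.1 k).2
      have : T m k ≤ min (n : ℤ) (x k + 1) := le_min h2 (by omega)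
      simpa [hmdef, hk] using this
    · simp [hTdef, hmdef, hk]
  obtain ⟨y, ⟨hyG, hyslice, hyd⟩, hyfix⟩ :=
    key ((∑ k, (m k - 1).toNat) + 1) m hPm hTm (Nat.lt_succ_self _)
  have hyj : y j = x j + ε := by
    rw [hyslice j hj, hx'def, Function.update_self]
  refine ⟨y, hyG, hyfix, hyj, ?_, ?_⟩
  · intro k hk hkj
    rw [hyslice k hk, hx'def, Function.update_of_ne hkj]
  · refine le_antisymm hyd ?_
    have h1 : (y j - x j).natAbs ≤ linf y x := hterm _ _ j
    have h2 : (y j - x j).natAbs = 1 := by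
      rw [hyj]
      rcases hε with h | h <;> simp [h]
    omega
end

section
/- Let f be a violation-free DMAC instance with unit displacements on the grid G = {1,…,n}^d, let 0 ≤ i ≤ d, let j be a coordinate with j > i, and let ε ∈ {−1, +1}. Suppose x is the least fixed point of the i-slice through x, that x + ε·e_j ∈ G, and that y is the least fixed point of the i-slice through x + ε·e_j. Then ‖y − x‖∞ = 1. -/
/-- From a pre-fixed point (on the first `i` coordinates) one can descend to an
`i`-fixed point below it, in the same slice. -/
lemma exists_fix_below {d n : ℕ} {f : (Fin d → ℤ) → (Fin d → ℤ)}
    (hrange : ∀ x, inGrid n x → inGrid n (f x))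
    (hmono : ∀ x y, inGrid n x → inGrid n y → x ≤ y → f x ≤ f y)
    (i : ℕ) :
    ∀ (m : ℕ) (v : Fin d → ℤ), (∑ k, (v k).toNat) ≤ m → inGrid n v →
      (∀ k : Fin d, (k : ℕ) < i → f v k ≤ v k) →
      ∃ z, inGrid n z ∧ z ≤ v ∧ (∀ k : Fin d, i ≤ (k : ℕ) → z k = v k) ∧
        (∀ k : Fin d, (k : ℕ) < i → f z k = z k) := by
  intro m
  induction m with
  | zero =>
    intro v hm hv _hpre
    refine ⟨v, hv, le_refl _, fun k _ => rfl, ?_⟩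
    intro k _
    exfalso
    have h1 := (hv k).1
    have h2 : (v k).toNat ≤ ∑ k, (v k).toNat :=
      Finset.single_le_sum (f := fun k => (v k).toNat) (fun _ _ => Nat.zero_le _) (Finset.mem_univ k)
    omega
  | succ m ih =>
    intro v hm hv hpre
    by_cases hfix : ∀ k : Fin d, (k : ℕ) < i → f v k = v k
    · exact ⟨v, hv, le_refl _, fun k _ => rfl, hfix⟩
    · push_neg at hfix
      obtain ⟨k0, hk0, hne0⟩ := hfix
      have hlt0 : f v k0 < v k0 := lt_of_le_of_ne (hpre k0 hk0) hne0
      set w : Fin d → ℤ := fun k => if (k : ℕ) < i then f v k else v k with hw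
      have hwle : w ≤ v := by
        intro k
        by_cases h : (k : ℕ) < i
        · simpa [hw, h] using hpre k h
        · simp [hw, h]
      have hwG : inGrid n w := by
        intro k
        by_cases h : (k : ℕ) < i
        · simpa [hw, h] using hrange v hv k
        · simpa [hw, h] using hv k
      have hfw : f w ≤ f v := hmono w v hwG hv hwle
      have hwpre : ∀ k : Fin d, (k : ℕ) < i → f w k ≤ w k := by
        intro k hk
        have := hfw k
        simpa [hw, hk] using this
      have hsum : (∑ k, (w k).toNat) ≤ m := by
        have hstrict : ∑ k, (w k).toNat < ∑ k, (v k).toNat := by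
          apply Finset.sum_lt_sum
          · intro k _; exact Int.toNat_le_toNat (hwle k)
          · refine ⟨k0, Finset.mem_univ k0, ?_⟩
            have h1 := (hwG k0).1
            have h2 : w k0 < v k0 := by simpa [hw, hk0] using hlt0
            omega
        omega
      obtain ⟨z, hzG, hzle, hzeq, hzfix⟩ := ih w hsum hwG hwpre
      refine ⟨z, hzG, hzle.trans hwle, ?_, hzfix⟩
      intro k hk
      rw [hzeq k hk]
      simp [hw, Nat.not_lt.mpr hk]

/-- Least fixed points of neighbouring `i`-slices of a violation-free DMAC
instance with unit displacements are at ℓ∞ distance exactly 1. -/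
theorem lfps_of_adjacent_slices (d n : ℕ) (hn : 1 ≤ n)
    (f : (Fin d → ℤ) → (Fin d → ℤ))
    (hrange : ∀ x, inGrid n x → inGrid n (f x))
    (hmono : ∀ x y, inGrid n x → inGrid n y → x ≤ y → f x ≤ f y)
    (hnonexp : ∀ x y, inGrid n x → inGrid n y → linf (f x) (f y) ≤ linf x y)
    (hunit : ∀ x, inGrid n x → linf (f x) x ≤ 1)
    (i : ℕ) (hi : i ≤ d)
    (j : Fin d) (hj : i ≤ (j : ℕ))
    (ε : ℤ) (hε : ε = 1 ∨ ε = -1)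
    (x y : Fin d → ℤ)
    -- `x` is the least fixed point of the `i`-slice through `x`
    (hxG : inGrid n x)
    (hxfix : ∀ k : Fin d, (k : ℕ) < i → f x k = x k)
    (hxleast : ∀ z, inGrid n z → (∀ k : Fin d, i ≤ (k : ℕ) → z k = x k) →
      (∀ k : Fin d, (k : ℕ) < i → f z k = z k) → x ≤ z)
    -- the neighbouring point `x + ε·e_j` lies in the grid
    (hx'G : inGrid n (Function.update x j (x j + ε)))
    -- `y` is the least fixed point of the `i`-slice through `x + ε·e_j`
    (hyG : inGrid n y)
    (hyslice : ∀ k : Fin d, i ≤ (k : ℕ) → y k = Function.update x j (x j + ε) k)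
    (hyfix : ∀ k : Fin d, (k : ℕ) < i → f y k = y k)
    (hyleast : ∀ z, inGrid n z → (∀ k : Fin d, i ≤ (k : ℕ) → z k = y k) →
      (∀ k : Fin d, (k : ℕ) < i → f z k = z k) → y ≤ z) :
    linf y x = 1 := by
  have hyj : y j = x j + ε := by
    have := hyslice j hj
    simpa using this
  have hyk : ∀ k : Fin d, i ≤ (k : ℕ) → k ≠ j → y k = x k := by
    intro k hk hkj
    have := hyslice k hk
    simpa [Function.update_of_ne hkj] using this
  -- extraction of a single coordinate bound from nonexpansiveness
  have hne : ∀ a b, inGrid n a → inGrid n b → linf a b ≤ 1 →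
      ∀ k, (f a k - f b k).natAbs ≤ 1 := by
    intro a b ha hb h k
    have h2 : linf (f a) (f b) ≤ 1 := (hnonexp a b ha hb).trans h
    exact le_trans (Finset.le_sup (f := fun k => (f a k - f b k).natAbs) (Finset.mem_univ k)) h2
  have key : ∀ k, x k - 1 ≤ y k ∧ y k ≤ x k + 1 := by
    rcases hε with hε1 | hε1
    · -- ε = 1 : show x ≤ y and y ≤ x + 1
      subst hε1
      -- lower bound: x ≤ y
      have hlow : ∀ k, x k ≤ y k := by
        set z0 : Fin d → ℤ := fun k => if (k : ℕ) < i then y k else x k with hz0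
        have hz0G : inGrid n z0 := by
          intro k; by_cases h : (k : ℕ) < i
          · simpa [hz0, h] using hyG k
          · simpa [hz0, h] using hxG k
        have hz0le : z0 ≤ y := by
          intro k; by_cases h : (k : ℕ) < i
          · simp [hz0, h]
          · have hk : i ≤ (k : ℕ) := Nat.le_of_not_lt h
            rcases eq_or_ne k j with rfl | hkj
            · simp only [hz0, if_neg h]; rw [hyj]; omega
            · simp only [hz0, if_neg h]; rw [hyk k hk hkj]
        have hz0pre : ∀ k : Fin d, (k : ℕ) < i → f z0 k ≤ z0 k := by
          intro k hk
          have := hmono z0 y hz0G hyG hz0le k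
          calc f z0 k ≤ f y k := this
            _ = y k := hyfix k hk
            _ = z0 k := by simp [hz0, hk]
        obtain ⟨z, hzG, hzle, hzeq, hzfix⟩ :=
          exists_fix_below hrange hmono i (∑ k, (z0 k).toNat) z0 le_rfl hz0G hz0pre
        have hxz : x ≤ z := by
          apply hxleast z hzG _ hzfix
          intro k hk
          rw [hzeq k hk]
          simp [hz0, Nat.not_lt.mpr hk]
        intro k
        calc x k ≤ z k := hxz k
          _ ≤ z0 k := hzle k
          _ ≤ y k := hz0le k
      -- upper bound: y ≤ x + 1
      have hup : ∀ k, y k ≤ x k + 1 := by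
        set v : Fin d → ℤ := fun k => if (k : ℕ) < i then min (x k + 1) (n : ℤ)
          else Function.update x j (x j + 1) k with hv
        have hvG : inGrid n v := by
          intro k; by_cases h : (k : ℕ) < i
          · have h1 := (hxG k).1
            have hn' : (1 : ℤ) ≤ n := by exact_mod_cast hn
            constructor
            · simp only [hv, if_pos h]; exact le_min (by omega) hn'
            · simp only [hv, if_pos h]; exact min_le_right _ _
          · simpa [hv, h] using hx'G k
        have hvx : linf v x ≤ 1 := by
          apply Finset.sup_le
          intro k _
          by_cases h : (k : ℕ) < i
          · have h1 := (hxG k).2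
            have h2 : min (x k + 1) (n : ℤ) ≤ x k + 1 := min_le_left _ _
            have h3 : x k ≤ min (x k + 1) (n : ℤ) := le_min (by omega) h1
            simp only [hv, if_pos h]
            omega
          · rcases eq_or_ne k j with rfl | hkj
            · simp [hv, h]
            · simp [hv, h, Function.update_of_ne hkj]
        have hvpre : ∀ k : Fin d, (k : ℕ) < i → f v k ≤ v k := by
          intro k hk
          have h1 := hne v x hvG hxG hvx k
          rw [hxfix k hk] at h1
          have h2 := (hrange v hvG k).2
          simp only [hv, if_pos hk]
          have h3 : f v k ≤ x k + 1 := by omega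
          exact le_min h3 h2
        obtain ⟨z, hzG, hzle, hzeq, hzfix⟩ :=
          exists_fix_below hrange hmono i (∑ k, (v k).toNat) v le_rfl hvG hvpre
        have hyz : y ≤ z := by
          apply hyleast z hzG _ hzfix
          intro k hk
          rw [hzeq k hk, hyslice k hk]
          simp [hv, Nat.not_lt.mpr hk]
        intro k
        have h4 : v k ≤ x k + 1 := by
          by_cases h : (k : ℕ) < i
          · simp only [hv, if_pos h]; exact min_le_left _ _
          · rcases eq_or_ne k j with rfl | hkj
            · simp [hv, h]
            · simp [hv, h, Function.update_of_ne hkj]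
        calc y k ≤ z k := hyz k
          _ ≤ v k := hzle k
          _ ≤ x k + 1 := h4
      intro k
      exact ⟨by have := hlow k; omega, hup k⟩
    · -- ε = -1 : show y ≤ x and x ≤ y + 1
      subst hε1
      have hup : ∀ k, y k ≤ x k := by
        set w : Fin d → ℤ := fun k => if (k : ℕ) < i then x k
          else Function.update x j (x j + (-1)) k with hw
        have hwG : inGrid n w := by
          intro k; by_cases h : (k : ℕ) < i
          · simpa [hw, h] using hxG k
          · simpa [hw, h] using hx'G k
        have hwlex : w ≤ x := by
          intro k; by_cases h : (k : ℕ) < i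
          · simp [hw, h]
          · rcases eq_or_ne k j with rfl | hkj
            · simp [hw, h]
            · simp [hw, h, Function.update_of_ne hkj]
        have hwpre : ∀ k : Fin d, (k : ℕ) < i → f w k ≤ w k := by
          intro k hk
          have := hmono w x hwG hxG hwlex k
          calc f w k ≤ f x k := this
            _ = x k := hxfix k hk
            _ = w k := by simp [hw, hk]
        obtain ⟨z, hzG, hzle, hzeq, hzfix⟩ :=
          exists_fix_below hrange hmono i (∑ k, (w k).toNat) w le_rfl hwG hwpre
        have hyz : y ≤ z := by
          apply hyleast z hzG _ hzfix
          intro k hk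
          rw [hzeq k hk, hyslice k hk]
          simp [hw, Nat.not_lt.mpr hk]
        intro k
        calc y k ≤ z k := hyz k
          _ ≤ w k := hzle k
          _ ≤ x k := hwlex k
      have hlow : ∀ k, x k ≤ y k + 1 := by
        set v : Fin d → ℤ := fun k => if (k : ℕ) < i then min (y k + 1) (n : ℤ)
          else x k with hv
        have hvG : inGrid n v := by
          intro k; by_cases h : (k : ℕ) < i
          · have h1 := (hyG k).1
            have hn' : (1 : ℤ) ≤ n := by exact_mod_cast hn
            constructor
            · simp only [hv, if_pos h]; exact le_min (by omega) hn'
            · simp only [hv, if_pos h]; exact min_le_right _ _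
          · simpa [hv, h] using hxG k
        have hvy : linf v y ≤ 1 := by
          apply Finset.sup_le
          intro k _
          by_cases h : (k : ℕ) < i
          · have h1 := (hyG k).2
            have h2 : min (y k + 1) (n : ℤ) ≤ y k + 1 := min_le_left _ _
            have h3 : y k ≤ min (y k + 1) (n : ℤ) := le_min (by omega) h1
            simp only [hv, if_pos h]
            omega
          · have hk : i ≤ (k : ℕ) := Nat.le_of_not_lt h
            rcases eq_or_ne k j with rfl | hkj
            · simp only [hv, if_neg h]
              rw [hyj]; simp
            · simp only [hv, if_neg h]
              rw [hyk k hk hkj]; simp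
        have hvpre : ∀ k : Fin d, (k : ℕ) < i → f v k ≤ v k := by
          intro k hk
          have h1 := hne v y hvG hyG hvy k
          rw [hyfix k hk] at h1
          have h2 := (hrange v hvG k).2
          simp only [hv, if_pos hk]
          have h3 : f v k ≤ y k + 1 := by omega
          exact le_min h3 h2
        obtain ⟨z, hzG, hzle, hzeq, hzfix⟩ :=
          exists_fix_below hrange hmono i (∑ k, (v k).toNat) v le_rfl hvG hvpre
        have hxz : x ≤ z := by
          apply hxleast z hzG _ hzfix
          intro k hk
          rw [hzeq k hk]
          simp [hv, Nat.not_lt.mpr hk]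
        intro k
        have h4 : v k ≤ y k + 1 := by
          by_cases h : (k : ℕ) < i
          · simp only [hv, if_pos h]; exact min_le_left _ _
          · have hk : i ≤ (k : ℕ) := Nat.le_of_not_lt h
            rcases eq_or_ne k j with rfl | hkj
            · simp only [hv, if_neg h]; rw [hyj]; omega
            · simp only [hv, if_neg h]; rw [hyk k hk hkj]; omega
        calc x k ≤ z k := hxz k
          _ ≤ v k := hzle k
          _ ≤ y k + 1 := h4
      intro k
      exact ⟨by have := hlow k; omega, by have := hup k; omega⟩
  have hd : (y j - x j).natAbs = 1 := by
    rw [hyj]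
    rcases hε with h | h <;> simp [h]
  refine le_antisymm ?_ ?_
  · apply Finset.sup_le
    intro k _
    have := key k
    omega
  · calc 1 = (y j - x j).natAbs := hd.symm
      _ ≤ linf y x := Finset.le_sup (f := fun k => (y k - x k).natAbs) (Finset.mem_univ j)
end

section
/- Least fixed points are hereditary: let f be a violation-free DMAC instance with unit displacements on the grid G = {1,…,n}^d, let S′ ⊆ S ⊆ {1,…,d}, and let x ∈ G. If x is the pointwise-least element of the set {z ∈ G : z_j = x_j for all j ∉ S, and f_j(z) = z_j for all j ∈ S}, then x is also the pointwise-least element of the set {z ∈ G : z_j = x_j for all j ∉ S′, and f_j(z) = z_j for all j ∈ S′}. -/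
/-- Least fixed points are hereditary: if `x` is the least fixed point of the
slice with free coordinates `S`, then it is also the least fixed point of any
subslice with free coordinates `S' ⊆ S` (both slices passing through `x`). -/
theorem lfp_hereditary (d n : ℕ) (hn : 1 ≤ n)
    (f : (Fin d → ℤ) → (Fin d → ℤ))
    (hrange : ∀ x, inGrid n x → inGrid n (f x))
    (hmono : ∀ x y, inGrid n x → inGrid n y → x ≤ y → f x ≤ f y)
    (hnonexp : ∀ x y, inGrid n x → inGrid n y → linf (f x) (f y) ≤ linf x y)
    (hunit : ∀ x, inGrid n x → linf (f x) x ≤ 1)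
    (S S' : Set (Fin d)) (hSS : S' ⊆ S)
    (x : Fin d → ℤ) (hxG : inGrid n x)
    -- `x` belongs to the slice-fixed-point set for `S`
    (hxfix : ∀ j ∈ S, f x j = x j)
    -- and is its pointwise-least element
    (hxleast : ∀ z, inGrid n z → (∀ j ∉ S, z j = x j) →
      (∀ j ∈ S, f z j = z j) → x ≤ z) :
    (∀ j ∈ S', f x j = x j) ∧
    (∀ z, inGrid n z → (∀ j ∉ S', z j = x j) →
      (∀ j ∈ S', f z j = z j) → x ≤ z) := by
  classical
  refine ⟨fun j hj => hxfix j (hSS hj), ?_⟩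
  intro z hzG hzoff hzfix
  -- the sliced map
  set h : (Fin d → ℤ) → (Fin d → ℤ) :=
    fun w j => if j ∈ S then f w j else x j with hh
  have hgrid : ∀ w, inGrid n w → inGrid n (h w) := by
    intro w hw i
    by_cases hi : i ∈ S
    · simpa [hh, hi] using hrange w hw i
    · simpa [hh, hi] using hxG i
  -- key induction: any pre-fixed point of h in the slice dominates x
  have key : ∀ N : ℕ, ∀ m : Fin d → ℤ, inGrid n m → (∀ j ∉ S, m j = x j) →
      h m ≤ m → (Finset.univ.sum fun i => (m i - 1).toNat) ≤ N → x ≤ m := by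
    intro N
    induction N with
    | zero =>
      intro m hmG hmoff hpre hsum
      by_cases heq : h m = m
      · refine hxleast m hmG hmoff ?_
        intro j hj
        have := congrFun heq j
        simpa [hh, hj] using this
      · exfalso
        have : ∃ j, h m j ≠ m j := by
          by_contra hc
          push_neg at hc
          exact heq (funext hc)
        obtain ⟨j, hj⟩ := this
        have h1 : h m j < m j := lt_of_le_of_ne (hpre j) hj
        have h2 : 1 ≤ h m j := (hgrid m hmG j).1
        have : (m j - 1).toNat = 0 := by
          have := Finset.sum_eq_zero_iff.mp (Nat.le_zero.mp hsum) j (Finset.mem_univ j)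
          exact this
        have : m j - 1 ≤ 0 := by omega
        omega
    | succ N ih =>
      intro m hmG hmoff hpre hsum
      by_cases heq : h m = m
      · refine hxleast m hmG hmoff ?_
        intro j hj
        have := congrFun heq j
        simpa [hh, hj] using this
      · -- strict decrease
        have hne : ∃ j, h m j ≠ m j := by
          by_contra hc
          push_neg at hc
          exact heq (funext hc)
        obtain ⟨j0, hj0⟩ := hne
        have hlt : (Finset.univ.sum fun i => (h m i - 1).toNat)
            < Finset.univ.sum fun i => (m i - 1).toNat := by
          refine Finset.sum_lt_sum (fun i _ => ?_) ⟨j0, Finset.mem_univ j0, ?_⟩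
          · have h1 : h m i ≤ m i := hpre i
            have h2 : 1 ≤ h m i := (hgrid m hmG i).1
            omega
          · have h1 : h m j0 < m j0 := lt_of_le_of_ne (hpre j0) hj0
            have h2 : 1 ≤ h m j0 := (hgrid m hmG j0).1
            omega
        have hsum' : (Finset.univ.sum fun i => (h m i - 1).toNat) ≤ N := by omega
        have hoff' : ∀ j ∉ S, h m j = x j := by
          intro j hj; simp [hh, hj]
        have hpre' : h (h m) ≤ h m := by
          intro j
          by_cases hj : j ∈ S
          · have := hmono (h m) m (hgrid m hmG) hmG hpre j
            simpa [hh, hj] using this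
          · simp [hh, hj]
        have := ih (h m) (hgrid m hmG) hoff' hpre' hsum'
        exact le_trans this hpre
  -- apply to the pointwise min of x and z
  set m : Fin d → ℤ := fun j => min (x j) (z j) with hm
  have hmG : inGrid n m := by
    intro i
    have h1 := hxG i; have h2 := hzG i
    constructor <;> simp [hm] <;> omega
  have hmx : m ≤ x := fun j => min_le_left _ _
  have hmz : m ≤ z := fun j => min_le_right _ _
  have hmoff : ∀ j ∉ S, m j = x j := by
    intro j hj
    have hj' : j ∉ S' := fun h => hj (hSS h)
    have := hzoff j hj'
    simp [hm, this]
  have hpre : h m ≤ m := by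
    intro j
    by_cases hj : j ∈ S
    · simp only [hh, hm, if_pos hj, le_min_iff]
      constructor
      · have := hmono m x hmG hxG hmx j
        calc f m j ≤ f x j := this
          _ = x j := hxfix j hj
      · by_cases hj' : j ∈ S'
        · have := hmono m z hmG hzG hmz j
          calc f m j ≤ f z j := this
            _ = z j := hzfix j hj'
        · have := hmono m x hmG hxG hmx j
          have hzx := hzoff j hj'
          calc f m j ≤ f x j := this
            _ = x j := hxfix j hj
            _ = z j := hzx.symm
    · simp [hh, hm, hj, hzoff j (fun h => hj (hSS h))]
  have hxm : x ≤ m := key _ m hmG hmoff hpre le_rfl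
  exact le_trans hxm hmz
end

section
/- Let f be a violation-free DMAC instance with unit displacements on G = G1 × G2, and let x, x̃ ∈ G1 be arbitrary. If y* is the pointwise-least fixed point of the sub-instance f^x and ỹ* is the pointwise-least fixed point of f^{x̃}, then ‖ỹ* − y*‖∞ ≤ ‖x̃ − x‖∞. -/
/-- Membership in the product grid `G1 × G2`. -/
def inGridP (n : ℕ) {d1 d2 : ℕ} (u : (Fin d1 → ℤ) × (Fin d2 → ℤ)) : Prop :=
  inGrid n u.1 ∧ inGrid n u.2

/-- The ℓ∞ distance on the product grid. -/
def linfP {d1 d2 : ℕ} (u v : (Fin d1 → ℤ) × (Fin d2 → ℤ)) : ℕ :=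
  max (linf u.1 v.1) (linf u.2 v.2)

lemma linf_comm {d : ℕ} (x y : Fin d → ℤ) : linf x y = linf y x := by
  unfold linf
  congr 1
  funext i
  omega

/-- Descent: a monotone grid self-map with a pre-fixed point `z` has a fixed
point below `z`. Induction on the measure `∑ (z i - 1).toNat`. -/
lemma descent {d : ℕ} (n : ℕ) (g : (Fin d → ℤ) → (Fin d → ℤ))
    (hrange : ∀ y, inGrid n y → inGrid n (g y))
    (hmono : ∀ u v, inGrid n u → inGrid n v → u ≤ v → g u ≤ g v) :
    ∀ N z, (∑ i, (z i - 1).toNat) ≤ N → inGrid n z → g z ≤ z →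
      ∃ w, inGrid n w ∧ g w = w ∧ w ≤ z := by
  intro N
  induction N with
  | zero =>
    intro z hm hz hd
    refine ⟨z, hz, ?_, le_refl z⟩
    funext i
    have h1 : g z i ≤ z i := hd i
    have h2 := (hrange z hz) i
    have h3 : (z i - 1).toNat = 0 :=
      Finset.sum_eq_zero_iff.mp (Nat.le_zero.mp hm) i (Finset.mem_univ i)
    have h4 := hz i
    omega
  | succ N ih =>
    intro z hm hz hd
    by_cases hfix : g z = z
    · exact ⟨z, hz, hfix, le_refl z⟩
    · have hgz := hrange z hz
      have hd2 : g (g z) ≤ g z := hmono _ _ hgz hz hd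
      have hlt : (∑ i, ((g z) i - 1).toNat) < ∑ i, (z i - 1).toNat := by
        obtain ⟨i, hi⟩ : ∃ i, g z i ≠ z i := by
          by_contra h
          push_neg at h
          exact hfix (funext h)
        refine Finset.sum_lt_sum (fun j _ => ?_) ⟨i, Finset.mem_univ i, ?_⟩
        · have hj : g z j ≤ z j := hd j
          omega
        · have h1 : g z i ≤ z i := hd i
          have h2 := hgz i
          omega
      obtain ⟨w, hw1, hw2, hw3⟩ := ih (g z) (by omega) hgz hd2
      exact ⟨w, hw1, hw2, le_trans hw3 hd⟩

lemma one_sided (d1 d2 n : ℕ)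
    (f : (Fin d1 → ℤ) × (Fin d2 → ℤ) → (Fin d1 → ℤ) × (Fin d2 → ℤ))
    (hrange : ∀ u, inGridP n u → inGridP n (f u))
    (hmono : ∀ u v, inGridP n u → inGridP n v → u ≤ v → f u ≤ f v)
    (hnonexp : ∀ u v, inGridP n u → inGridP n v → linfP (f u) (f v) ≤ linfP u v)
    (x xt : Fin d1 → ℤ) (hx : inGrid n x) (hxt : inGrid n xt)
    (ys yts : Fin d2 → ℤ)
    (hysG : inGrid n ys) (hysfix : (f (x, ys)).2 = ys)
    (hytsleast : ∀ z, inGrid n z → (f (xt, z)).2 = z → yts ≤ z) :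
    ∀ i, yts i ≤ ys i + (linf xt x : ℤ) := by
  set k : ℕ := linf xt x with hkdef
  set z : Fin d2 → ℤ := fun i => min (ys i + (k : ℤ)) (n : ℤ) with hzdef
  have hzG : inGrid n z := by
    intro i
    have := hysG i
    simp only [hzdef]
    omega
  have hlz : linf z ys ≤ k := by
    refine Finset.sup_le fun i _ => ?_
    have := hysG i
    simp only [hzdef]
    omega
  have hP : linfP (xt, z) (x, ys) ≤ k := max_le (le_of_eq rfl) hlz
  have hGz : inGridP n (xt, z) := ⟨hxt, hzG⟩
  have hGy : inGridP n (x, ys) := ⟨hx, hysG⟩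
  have hN : linf (f (xt, z)).2 (f (x, ys)).2 ≤ k :=
    le_trans (le_max_right _ _) (le_trans (hnonexp _ _ hGz hGy) hP)
  -- f^xt as a map g
  set g : (Fin d2 → ℤ) → (Fin d2 → ℤ) := fun y => (f (xt, y)).2 with hgdef
  have hgrange : ∀ y, inGrid n y → inGrid n (g y) := fun y hy => (hrange (xt, y) ⟨hxt, hy⟩).2
  have hgmono : ∀ u v, inGrid n u → inGrid n v → u ≤ v → g u ≤ g v := by
    intro u v hu hv huv
    exact (hmono (xt, u) (xt, v) ⟨hxt, hu⟩ ⟨hxt, hv⟩ ⟨le_refl xt, huv⟩).2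
  have hpre : g z ≤ z := by
    intro i
    have h1 : ((f (xt, z)).2 i - (f (x, ys)).2 i).natAbs ≤ k :=
      le_trans (Finset.le_sup (f := fun j => ((f (xt, z)).2 j - (f (x, ys)).2 j).natAbs)
        (Finset.mem_univ i)) hN
    rw [hysfix] at h1
    have h2 := ((hrange (xt, z) hGz).2) i
    have hzi : z i = min (ys i + (k : ℤ)) (n : ℤ) := rfl
    show (f (xt, z)).2 i ≤ z i
    omega
  obtain ⟨w, hwG, hwfix, hwle⟩ :=
    descent n g hgrange hgmono (∑ i, (z i - 1).toNat) z le_rfl hzG hpre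
  intro i
  have h1 : yts i ≤ w i := hytsleast w hwG hwfix i
  have h2 : w i ≤ z i := hwle i
  simp only [hzdef] at h2
  omega

/-- For arbitrary `x, x̃ ∈ G1`, the least fixed points `y*` of `f^x` and
`ỹ*` of `f^x̃` satisfy `‖ỹ* − y*‖∞ ≤ ‖x̃ − x‖∞`. -/
theorem subslice_lfp_nonexpansive (d1 d2 n : ℕ) (hn : 1 ≤ n)
    (f : (Fin d1 → ℤ) × (Fin d2 → ℤ) → (Fin d1 → ℤ) × (Fin d2 → ℤ))
    (hrange : ∀ u, inGridP n u → inGridP n (f u))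
    (hmono : ∀ u v, inGridP n u → inGridP n v → u ≤ v → f u ≤ f v)
    (hnonexp : ∀ u v, inGridP n u → inGridP n v → linfP (f u) (f v) ≤ linfP u v)
    (hunit : ∀ u, inGridP n u → linfP (f u) u ≤ 1)
    (x xt : Fin d1 → ℤ) (hx : inGrid n x) (hxt : inGrid n xt)
    (ys yts : Fin d2 → ℤ)
    -- `ys` is the least fixed point of `f^x`
    (hysG : inGrid n ys) (hysfix : (f (x, ys)).2 = ys)
    (hysleast : ∀ z, inGrid n z → (f (x, z)).2 = z → ys ≤ z)
    -- `yts` is the least fixed point of `f^x̃`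
    (hytsG : inGrid n yts) (hytsfix : (f (xt, yts)).2 = yts)
    (hytsleast : ∀ z, inGrid n z → (f (xt, z)).2 = z → yts ≤ z) :
    linf yts ys ≤ linf xt x := by
  have h1 := one_sided d1 d2 n f hrange hmono hnonexp x xt hx hxt ys yts hysG hysfix hytsleast
  have h2 := one_sided d1 d2 n f hrange hmono hnonexp xt x hxt hx yts ys hytsG hytsfix hysleast
  rw [linf_comm x xt] at h2
  refine Finset.sup_le fun i _ => ?_
  have := h1 i
  have := h2 i
  omega
end

section
/- Surfaces of violation-free 1DUniqueDMAC instances are monotone: let f be a violation-free 1DUniqueDMAC instance on the grid G = {1,…,n}^d, let i be a coordinate, and let x, y ∈ G satisfy f_i(x) = x_i, f_i(y) = y_i, and x_j ≤ y_j for every coordinate j ≠ i. Then x_i ≤ y_i. -/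
/-- Surfaces of a violation-free 1DUniqueDMAC instance are monotone: if
`f_i(x) = x_i`, `f_i(y) = y_i` and `x_j ≤ y_j` for all `j ≠ i`, then
`x_i ≤ y_i`. -/
theorem surface_monotone (d n : ℕ) (hn : 1 ≤ n)
    (f : (Fin d → ℤ) → (Fin d → ℤ))
    (hrange : ∀ x, inGrid n x → inGrid n (f x))
    (hmono : ∀ x y, inGrid n x → inGrid n y → x ≤ y → f x ≤ f y)
    (hnonexp : ∀ x y, inGrid n x → inGrid n y → linf (f x) (f y) ≤ linf x y)
    (hunit : ∀ x, inGrid n x → linf (f x) x ≤ 1)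
    (huniq : ∀ x : Fin d → ℤ, inGrid n x → ∀ i : Fin d,
      ∃! y : Fin d → ℤ, inGrid n y ∧ (∀ j, j ≠ i → y j = x j) ∧ f y i = y i)
    (i : Fin d) (x y : Fin d → ℤ)
    (hxG : inGrid n x) (hyG : inGrid n y)
    (hxfix : f x i = x i) (hyfix : f y i = y i)
    (hle : ∀ j, j ≠ i → x j ≤ y j) :
    x i ≤ y i := by
  by_contra h
  push_neg at h
  -- z agrees with y off coordinate i, and z i = x i
  set z : Fin d → ℤ := Function.update y i (x i) with hz
  have hzi : z i = x i := Function.update_self i (x i) y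
  have hzj : ∀ j, j ≠ i → z j = y j := fun j hj => Function.update_of_ne hj _ _
  have hzG : inGrid n z := by
    intro j
    by_cases hj : j = i
    · subst hj; rw [hzi]; exact hxG j
    · rw [hzj j hj]; exact hyG j
  -- x ≤ z, hence f z i ≥ x i = z i
  have hxz : x ≤ z := by
    intro j
    by_cases hj : j = i
    · subst hj; rw [hzi]
    · rw [hzj j hj]; exact hle j hj
  have h1 : z i ≤ f z i := by
    have := hmono x z hxG hzG hxz i
    rw [hxfix] at this
    rw [hzi]; exact this
  -- nonexpansiveness between z and y gives f z i ≤ z i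
  have hlinfzy : linf z y ≤ (x i - y i).natAbs := by
    apply Finset.sup_le
    intro j _
    by_cases hj : j = i
    · subst hj; rw [hzi]
    · rw [hzj j hj]; simp
  have hstep : (f z i - f y i).natAbs ≤ linf (f z) (f y) :=
    Finset.le_sup (f := fun j => (f z j - f y j).natAbs) (Finset.mem_univ i)
  have hcomp : (f z i - f y i).natAbs ≤ (x i - y i).natAbs :=
    le_trans hstep (le_trans (hnonexp z y hzG hyG) hlinfzy)
  have h2 : f z i ≤ z i := by
    rw [hyfix] at hcomp
    have hc : ((f z i - y i).natAbs : ℤ) ≤ ((x i - y i).natAbs : ℤ) := by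
      exact_mod_cast hcomp
    have e1 : f z i - y i ≤ ((f z i - y i).natAbs : ℤ) := Int.le_natAbs
    have e2 : ((x i - y i).natAbs : ℤ) = x i - y i :=
      Int.natAbs_of_nonneg (by linarith)
    rw [hzi]; linarith
  have hfix : f z i = z i := le_antisymm h2 h1
  -- uniqueness on the line through y in direction i
  obtain ⟨w, _, hw⟩ := huniq y hyG i
  have hzw : z = w := hw z ⟨hzG, hzj, hfix⟩
  have hyw : y = w := hw y ⟨hyG, fun j _ => rfl, hyfix⟩
  have : x i = y i := by rw [← hzi, hzw, ← hyw]
  linarith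
end

section
/- Surfaces of violation-free 1DUniqueDMAC instances have gradient at most one: let f be a violation-free 1DUniqueDMAC instance on the grid G = {1,…,n}^d, let i be a coordinate, and let x, y ∈ G satisfy f_i(x) = x_i and f_i(y) = y_i. Then |x_i − y_i| ≤ max over coordinates j ≠ i of |x_j − y_j|. -/
theorem surface_gradient_aux (d n : ℕ)
    (f : (Fin d → ℤ) → (Fin d → ℤ))
    (hnonexp : ∀ x y, inGrid n x → inGrid n y → linf (f x) (f y) ≤ linf x y)
    (huniq : ∀ x : Fin d → ℤ, inGrid n x → ∀ i : Fin d,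
      ∃! y : Fin d → ℤ, inGrid n y ∧ (∀ j, j ≠ i → y j = x j) ∧ f y i = y i)
    (i : Fin d) (x y : Fin d → ℤ)
    (hxG : inGrid n x) (hyG : inGrid n y)
    (hxfix : f x i = x i) (hyfix : f y i = y i)
    (hlt : y i < x i) :
    (x i - y i).natAbs ≤ (Finset.univ.erase i).sup fun j => (x j - y j).natAbs := by
  by_contra hcon
  set M : ℕ := (Finset.univ.erase i).sup fun j => (x j - y j).natAbs with hM
  have hgt : (M : ℤ) < x i - y i := by omega
  set z : Fin d → ℤ := Function.update x i (y i + M) with hz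
  have hzi : z i = y i + M := by simp [hz]
  have hzj : ∀ j, j ≠ i → z j = x j := by
    intro j hj; simp [hz, Function.update_of_ne hj]
  have hzG : inGrid n z := by
    intro j
    by_cases hj : j = i
    · subst hj; rw [hzi]
      have h1 := (hyG j).1
      have h2 := (hxG j).2
      constructor <;> omega
    · rw [hzj j hj]; exact hxG j
  have hzy : linf z y ≤ M := by
    rw [linf]
    apply Finset.sup_le
    intro j _
    by_cases hj : j = i
    · subst hj; rw [hzi]; omega
    · rw [hzj j hj]
      exact Finset.le_sup (f := fun j => (x j - y j).natAbs) (Finset.mem_erase.mpr ⟨hj, Finset.mem_univ j⟩)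
  have h1 : (f z i - f y i).natAbs ≤ M :=
    le_trans (Finset.le_sup (f := fun j => (f z j - f y j).natAbs) (Finset.mem_univ i))
      (by simpa [linf] using le_trans (hnonexp z y hzG hyG) hzy)
  have hfzle : f z i ≤ z i := by rw [hzi, ← hyfix]; omega
  have hzx : linf z x ≤ (x i - z i).natAbs := by
    rw [linf]
    apply Finset.sup_le
    intro j _
    by_cases hj : j = i
    · subst hj; omega
    · rw [hzj j hj]; simp
  have h2 : (f z i - f x i).natAbs ≤ (x i - z i).natAbs :=
    le_trans (Finset.le_sup (f := fun j => (f z j - f x j).natAbs) (Finset.mem_univ i))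
      (by simpa [linf] using le_trans (hnonexp z x hzG hxG) hzx)
  have hfzge : z i ≤ f z i := by rw [hxfix] at h2; omega
  have hfz : f z i = z i := le_antisymm hfzle hfzge
  obtain ⟨w, _, hwu⟩ := huniq x hxG i
  have ez := hwu z ⟨hzG, hzj, hfz⟩
  have ex := hwu x ⟨hxG, fun j _ => rfl, hxfix⟩
  have : z i = x i := by rw [ez, ex]
  omega

/-- Surfaces of a violation-free 1DUniqueDMAC instance have gradient at most
one: if `f_i(x) = x_i` and `f_i(y) = y_i`, then
`|x_i − y_i| ≤ max_{j ≠ i} |x_j − y_j|`. -/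
theorem surface_gradient_le_one (d n : ℕ) (hn : 1 ≤ n)
    (f : (Fin d → ℤ) → (Fin d → ℤ))
    (hrange : ∀ x, inGrid n x → inGrid n (f x))
    (hmono : ∀ x y, inGrid n x → inGrid n y → x ≤ y → f x ≤ f y)
    (hnonexp : ∀ x y, inGrid n x → inGrid n y → linf (f x) (f y) ≤ linf x y)
    (hunit : ∀ x, inGrid n x → linf (f x) x ≤ 1)
    (huniq : ∀ x : Fin d → ℤ, inGrid n x → ∀ i : Fin d,
      ∃! y : Fin d → ℤ, inGrid n y ∧ (∀ j, j ≠ i → y j = x j) ∧ f y i = y i)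
    (i : Fin d) (x y : Fin d → ℤ)
    (hxG : inGrid n x) (hyG : inGrid n y)
    (hxfix : f x i = x i) (hyfix : f y i = y i) :
    (x i - y i).natAbs ≤ (Finset.univ.erase i).sup fun j => (x j - y j).natAbs := by
  rcases lt_trichotomy (y i) (x i) with h | h | h
  · exact surface_gradient_aux d n f hnonexp huniq i x y hxG hyG hxfix hyfix h
  · simp [h]
  · have hswap := surface_gradient_aux d n f hnonexp huniq i y x hyG hxG hyfix hxfix h
    have hsup : ((Finset.univ.erase i).sup fun j => (y j - x j).natAbs)
        = (Finset.univ.erase i).sup fun j => (x j - y j).natAbs := by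
      apply Finset.sup_congr rfl
      intro j _
      omega
    omega
end

section
/- Let f be a 1DUniqueDMAC instance on the grid G = {1,…,n}^d satisfying, for every coordinate i: (1D rationality) for all x, y ∈ G with y_j = x_j for all j ≠ i and f_i(y) = y_i, if x_i < y_i then f_i(x) > x_i, and if x_i > y_i then f_i(x) < x_i; (monotone surfaces) for all x, y ∈ G with f_i(x) = x_i, f_i(y) = y_i, and x_j ≤ y_j for all j ≠ i, one has x_i ≤ y_i; (gradient at most one) for all x, y ∈ G with f_i(x) = x_i and f_i(y) = y_i, one has |x_i − y_i| ≤ max over j ≠ i of |x_j − y_j|. Then f is violation-free: for all x, y ∈ G, x ≤ y implies f(x) ≤ f(y), and ‖f(x) − f(y)‖∞ ≤ ‖x − y‖∞. -/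
lemma clamp_mono' (a b s t : ℤ) (hab : a ≤ b) (hst : s ≤ t) :
    max (a - 1) (min (a + 1) s) ≤ max (b - 1) (min (b + 1) t) := by
  simp only [min_def, max_def]
  split_ifs <;> omega

lemma clamp_lip' (a b s t : ℤ) (k : ℕ) (h1 : (a - b).natAbs ≤ k) (h2 : (s - t).natAbs ≤ k) :
    (max (a - 1) (min (a + 1) s) - max (b - 1) (min (b + 1) t)).natAbs ≤ k := by
  simp only [min_def, max_def]
  split_ifs <;> omega

/-- A 1DUniqueDMAC instance that is 1D rational and whose surfaces are
monotone with gradient at most one is violation-free (monotone and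
non-expansive on the grid). -/
theorem surfaces_imply_violation_free (d n : ℕ) (hn : 1 ≤ n)
    (f : (Fin d → ℤ) → (Fin d → ℤ))
    (hrange : ∀ x, inGrid n x → inGrid n (f x))
    (hunit : ∀ x, inGrid n x → linf (f x) x ≤ 1)
    (huniq : ∀ x : Fin d → ℤ, inGrid n x → ∀ i : Fin d,
      ∃! y : Fin d → ℤ, inGrid n y ∧ (∀ j, j ≠ i → y j = x j) ∧ f y i = y i)
    -- 1D rationality: f always moves towards the 1D fixed point of the slice
    (hrat : ∀ i : Fin d, ∀ x y : Fin d → ℤ, inGrid n x → inGrid n y →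
      (∀ j, j ≠ i → y j = x j) → f y i = y i →
      (x i < y i → x i < f x i) ∧ (y i < x i → f x i < x i))
    -- monotone surfaces
    (hsurfmono : ∀ i : Fin d, ∀ x y : Fin d → ℤ, inGrid n x → inGrid n y →
      f x i = x i → f y i = y i → (∀ j, j ≠ i → x j ≤ y j) → x i ≤ y i)
    -- gradient at most one
    (hgrad : ∀ i : Fin d, ∀ x y : Fin d → ℤ, inGrid n x → inGrid n y →
      f x i = x i → f y i = y i →
      (x i - y i).natAbs ≤ (Finset.univ.erase i).sup fun j => (x j - y j).natAbs) :
    ∀ x y : Fin d → ℤ, inGrid n x → inGrid n y →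
      (x ≤ y → f x ≤ f y) ∧ linf (f x) (f y) ≤ linf x y := by
  -- Key: for every grid point z and coordinate i, the unique slice fixed point u
  -- determines f z i by a clamping formula.
  have key : ∀ z, inGrid n z → ∀ i, ∃ u, inGrid n u ∧ (∀ j, j ≠ i → u j = z j) ∧
      f u i = u i ∧ f z i = max (z i - 1) (min (z i + 1) (u i)) := by
    intro z hz i
    obtain ⟨u, ⟨hu, huj, huf⟩, -⟩ := huniq z hz i
    refine ⟨u, hu, huj, huf, ?_⟩
    have hb : (f z i - z i).natAbs ≤ 1 :=
      le_trans (Finset.le_sup (f := fun j => (f z j - z j).natAbs) (Finset.mem_univ i))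
        (hunit z hz)
    rcases lt_trichotomy (z i) (u i) with h | h | h
    · have := (hrat i z u hz hu huj huf).1 h
      omega
    · have huz : u = z := funext fun j => by
        by_cases hj : j = i
        · subst hj; exact h.symm
        · exact huj j hj
      rw [huz] at huf
      omega
    · have := (hrat i z u hz hu huj huf).2 h
      omega
  intro x y hx hy
  constructor
  · intro hxy i
    obtain ⟨u, hu, huj, huf, hfx⟩ := key x hx i
    obtain ⟨v, hv, hvj, hvf, hfy⟩ := key y hy i
    have huv : u i ≤ v i := hsurfmono i u v hu hv huf hvf
      (fun j hj => by rw [huj j hj, hvj j hj]; exact hxy j)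
    rw [hfx, hfy]
    exact clamp_mono' _ _ _ _ (hxy i) huv
  · rw [linf]
    apply Finset.sup_le
    intro i _
    obtain ⟨u, hu, huj, huf, hfx⟩ := key x hx i
    obtain ⟨v, hv, hvj, hvf, hfy⟩ := key y hy i
    have h1 : (u i - v i).natAbs ≤ linf x y := by
      refine (hgrad i u v hu hv huf hvf).trans (Finset.sup_le fun j hj => ?_)
      have hj' : j ≠ i := (Finset.mem_erase.mp hj).1
      rw [huj j hj', hvj j hj']
      exact Finset.le_sup (f := fun j => (x j - y j).natAbs) (Finset.mem_univ j)
    have h2 : (x i - y i).natAbs ≤ linf x y :=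
      Finset.le_sup (f := fun j => (x j - y j).natAbs) (Finset.mem_univ i)
    rw [hfx, hfy]
    exact clamp_lip' _ _ _ _ _ h2 h1
end

section
/- If x, y ∈ G satisfy ‖f(x) − f(y)‖∞ > ‖x − y‖∞ (a non-expansion violation for the discretized instance f), then x ≠ y and ‖g(x̂) − g(ŷ)‖∞ ≥ ‖x̂ − ŷ‖∞; in particular, for every λ ∈ [0,1), the points x̂ and ŷ witness a violation of λ-contraction of g in the ℓ∞ norm, i.e., ‖g(x̂) − g(ŷ)‖∞ > λ·‖x̂ − ŷ‖∞. -/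
/-- The clamped sign function used to discretize displacements:
`sgne εh t = 1` if `t ≥ εh`, `−1` if `t ≤ −εh`, and `0` otherwise. -/
noncomputable def sgne (εh t : ℝ) : ℤ :=
  if εh ≤ t then 1 else if t ≤ -εh then -1 else 0

/-!
Fix a coordinate `i` with `|f_i(x) - f_i(y)| > ‖x - y‖∞` and write `u = g_i(x̂) - x̂_i`,
`v = g_i(ŷ) - ŷ_i`. The signs `sgne u` and `sgne v` must then differ in the direction of
`x_i - y_i`. Since `sgne` is monotone with thresholds `±ε̂`, a jump of the signs by `s ≥ 1` forces
`u - v > ε̂ (s - 1)`, and this surplus makes up for the room `x_i - y_i` leaves below `‖x - y‖∞`.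
Hence `|g_i(x̂) - g_i(ŷ)| > ε̂ ‖x - y‖∞ ≥ ‖x̂ - ŷ‖∞`, a strict inequality that gives all three
claims.
-/

theorem sgne_monotone (εh : ℝ) : Monotone (sgne εh) := by
  intro u v huv
  unfold sgne
  split_ifs <;> linarith

theorem mul_sgne_sub_sgne_sub_one_lt {εh u v : ℝ} (h : sgne εh v < sgne εh u) :
    εh * ((sgne εh u : ℝ) - sgne εh v - 1) < u - v := by
  have huv : v < u := (sgne_monotone εh).reflect_lt h
  unfold sgne at h ⊢
  split_ifs at h ⊢ <;> first | omega | (push_cast; linarith)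

theorem mul_lt_sub_add_of_lt_add_sgne_sub {εh u v : ℝ} {p q m : ℤ} (hε : 0 ≤ εh)
    (hpq : p - q ≤ m) (h : m < p + sgne εh u - (q + sgne εh v)) :
    εh * m < u - v + εh * (p - q) := by
  have hjump : εh * ((sgne εh u : ℝ) - sgne εh v - 1) < u - v :=
    mul_sgne_sub_sgne_sub_one_lt (by omega)
  have hroom : (m : ℝ) - (p - q) ≤ (sgne εh u : ℝ) - sgne εh v - 1 := by
    exact_mod_cast (by omega : m - (p - q) ≤ sgne εh u - sgne εh v - 1)
  linarith [mul_le_mul_of_nonneg_left hroom hε]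

theorem mul_lt_abs_sub_add_of_lt_abs_add_sgne_sub {εh u v : ℝ} {p q m : ℤ} (hε : 0 ≤ εh)
    (hpq : |p - q| ≤ m) (h : m < |p + sgne εh u - (q + sgne εh v)|) :
    εh * m < |u - v + εh * (p - q)| := by
  rcases lt_abs.mp h with h | h
  · exact (mul_lt_sub_add_of_lt_add_sgne_sub hε ((le_abs_self _).trans hpq) h).trans_le
      (le_abs_self _)
  · have := mul_lt_sub_add_of_lt_add_sgne_sub (u := v) (v := u) (p := q) (q := p) (m := m)
      hε ((le_abs_self _).trans (abs_sub_comm p q ▸ hpq)) (by linarith)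
    linarith [neg_abs_le (u - v + εh * (p - q))]

section linf

variable {d : ℕ} (x y : Fin d → ℤ)

theorem abs_sub_le_linf (i : Fin d) : |x i - y i| ≤ (linf x y : ℤ) := by
  rw [Int.abs_eq_natAbs]
  exact_mod_cast Finset.le_sup (f := fun j => (x j - y j).natAbs) (Finset.mem_univ i)

theorem exists_lt_abs_sub_of_lt_linf {m : ℕ} (h : m < linf x y) :
    ∃ i, (m : ℤ) < |x i - y i| := by
  obtain ⟨i, -, hi⟩ := Finset.lt_sup_iff.mp h
  exact ⟨i, by rw [Int.abs_eq_natAbs]; exact_mod_cast hi⟩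

theorem norm_mul_cast_sub_le_mul_linf {c : ℝ} (hc : 0 ≤ c) :
    ‖(fun k => c * (x k : ℝ)) - (fun k => c * (y k : ℝ))‖ ≤ c * linf x y := by
  refine (pi_norm_le_iff_of_nonneg (by positivity)).mpr fun i => ?_
  have hi : |((x i - y i : ℤ) : ℝ)| ≤ (linf x y : ℝ) := by
    exact_mod_cast abs_sub_le_linf x y i
  rw [Pi.sub_apply, Real.norm_eq_abs, ← mul_sub, abs_mul, abs_of_nonneg hc]
  push_cast at hi
  exact mul_le_mul_of_nonneg_left hi hc

end linf

theorem dmac_violation_to_contraction_violation_general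
    (d : ℕ)
    (N : ℕ)
    (g : (Fin d → ℝ) → (Fin d → ℝ))
    (f : (Fin d → ℤ) → (Fin d → ℤ))
    (hf : ∀ (y : Fin d → ℤ) (i : Fin d),
      f y i = y i + sgne ((N : ℝ)⁻¹)
        (g (fun k => (N : ℝ)⁻¹ * (y k : ℝ)) i - (N : ℝ)⁻¹ * (y i : ℝ)))
    (x y : Fin d → ℤ)
    (hviol : linf x y < linf (f x) (f y)) :
    x ≠ y ∧
    ‖g (fun k => (N : ℝ)⁻¹ * (x k : ℝ)) - g (fun k => (N : ℝ)⁻¹ * (y k : ℝ))‖ ≥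
      ‖(fun k => (N : ℝ)⁻¹ * (x k : ℝ)) - (fun k => (N : ℝ)⁻¹ * (y k : ℝ))‖ ∧
    ∀ lam : ℝ, 0 ≤ lam → lam < 1 →
      ‖g (fun k => (N : ℝ)⁻¹ * (x k : ℝ)) - g (fun k => (N : ℝ)⁻¹ * (y k : ℝ))‖ >
        lam * ‖(fun k => (N : ℝ)⁻¹ * (x k : ℝ)) - (fun k => (N : ℝ)⁻¹ * (y k : ℝ))‖ := by
  have hxy : x ≠ y := by
    rintro rfl
    simp [linf] at hviol
  set εh : ℝ := (N : ℝ)⁻¹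
  set X : Fin d → ℝ := fun k => εh * (x k : ℝ) with hX
  set Y : Fin d → ℝ := fun k => εh * (y k : ℝ) with hY
  have hε : 0 ≤ εh := by positivity
  obtain ⟨i, hi⟩ := exists_lt_abs_sub_of_lt_linf (f x) (f y) hviol
  rw [hf x i, hf y i] at hi
  have hcoord : εh * linf x y < |g X i - g Y i| := by
    have := mul_lt_abs_sub_add_of_lt_abs_add_sgne_sub hε (abs_sub_le_linf x y i) hi
    convert this using 2
    · norm_cast
    · rw [hX, hY]
      ring
  have hgap : ‖X - Y‖ < ‖g X - g Y‖ :=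
    calc ‖X - Y‖ ≤ εh * linf x y := norm_mul_cast_sub_le_mul_linf x y hε
      _ < |g X i - g Y i| := hcoord
      _ ≤ ‖g X - g Y‖ := by simpa using norm_le_pi_norm (g X - g Y) i
  refine ⟨hxy, hgap.le, fun lam _ hlam => ?_⟩
  nlinarith [norm_nonneg (X - Y)]

/-- A non-expansion violation of the discretized instance `f` maps back to a
violation of `λ`-contraction of `g` (for every `λ ∈ [0,1)`) in the ℓ∞ norm. -/
theorem dmac_violation_to_contraction_violation
    (d : ℕ) (hd : 1 ≤ d) (ε : ℝ) (hε0 : 0 < ε) (hε1 : ε < 1)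
    (N : ℕ) (hN : N = ⌈1 / ε⌉₊)
    (g : (Fin d → ℝ) → (Fin d → ℝ))
    (hg : ∀ x : Fin d → ℝ, (∀ i, 0 ≤ x i ∧ x i ≤ 1) → ∀ i, 0 ≤ g x i ∧ g x i ≤ 1)
    (f : (Fin d → ℤ) → (Fin d → ℤ))
    (hf : ∀ (y : Fin d → ℤ) (i : Fin d),
      f y i = y i + sgne ((N : ℝ)⁻¹)
        (g (fun k => (N : ℝ)⁻¹ * (y k : ℝ)) i - (N : ℝ)⁻¹ * (y i : ℝ)))
    (x y : Fin d → ℤ)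
    (hx : ∀ i, 0 ≤ x i ∧ x i ≤ (N : ℤ)) (hy : ∀ i, 0 ≤ y i ∧ y i ≤ (N : ℤ))
    (hviol : linf x y < linf (f x) (f y)) :
    x ≠ y ∧
    ‖g (fun k => (N : ℝ)⁻¹ * (x k : ℝ)) - g (fun k => (N : ℝ)⁻¹ * (y k : ℝ))‖ ≥
      ‖(fun k => (N : ℝ)⁻¹ * (x k : ℝ)) - (fun k => (N : ℝ)⁻¹ * (y k : ℝ))‖ ∧
    ∀ lam : ℝ, 0 ≤ lam → lam < 1 →
      ‖g (fun k => (N : ℝ)⁻¹ * (x k : ℝ)) - g (fun k => (N : ℝ)⁻¹ * (y k : ℝ))‖ >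
        lam * ‖(fun k => (N : ℝ)⁻¹ * (x k : ℝ)) - (fun k => (N : ℝ)⁻¹ * (y k : ℝ))‖ :=
  dmac_violation_to_contraction_violation_general d N g f hf x y hviol
end

section
/- Every point of a critical box lies in the up-set: let G = {1,…,n}^3 and let f : G → G be monotone and non-expansive on G. If (x, h, w) is a critical box, then for all integers a, b with 0 ≤ a ≤ w and 0 ≤ b ≤ h, the point y = x + a·e1 + b·e2 satisfies y ≤ f(y), i.e., y ∈ Up(f). -/
/-- Membership in the grid `{1, …, n}^3 ⊆ ℤ^3`. -/
def inGrid3 (n : ℕ) (x : Fin 3 → ℤ) : Prop :=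
  ∀ i, 1 ≤ x i ∧ x i ≤ (n : ℤ)

/-- The ℓ∞ distance `‖x − y‖∞ = max_i |x_i − y_i|` (as a natural number). -/
def linf3 (x y : Fin 3 → ℤ) : ℕ :=
  Finset.univ.sup fun i => (x i - y i).natAbs

/-- `bump x i c` is the point `x + c·e_i`. -/
def bump (x : Fin 3 → ℤ) (i : Fin 3) (c : ℤ) : Fin 3 → ℤ :=
  Function.update x i (x i + c)

/-- `(x, h, w)` is a critical box for the two-dimensional slice through `x`
(the slice with third coordinate `x 2`). -/
def IsCriticalBox (n : ℕ) (f : (Fin 3 → ℤ) → (Fin 3 → ℤ))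
    (x : Fin 3 → ℤ) (h w : ℕ) : Prop :=
  inGrid3 n x ∧ x ≤ f x ∧
  inGrid3 n (bump x 0 (w : ℤ)) ∧ inGrid3 n (bump x 0 ((w : ℤ) + 1)) ∧
  x 0 + (w : ℤ) ≤ f (bump x 0 (w : ℤ)) 0 ∧
  f (bump x 0 ((w : ℤ) + 1)) 0 < x 0 + (w : ℤ) + 1 ∧
  inGrid3 n (bump x 1 (h : ℤ)) ∧ inGrid3 n (bump x 1 ((h : ℤ) + 1)) ∧
  x 1 + (h : ℤ) ≤ f (bump x 1 (h : ℤ)) 1 ∧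
  f (bump x 1 ((h : ℤ) + 1)) 1 < x 1 + (h : ℤ) + 1 ∧
  (x 0 = 1 ∨ x 1 = 1 ∨ f (bump (bump x 0 (-1)) 1 (-1)) 2 < x 2)

lemma bump_apply_self (x : Fin 3 → ℤ) (i : Fin 3) (c : ℤ) : bump x i c i = x i + c := by
  simp [bump]

lemma bump_apply_ne (x : Fin 3 → ℤ) {i j : Fin 3} (c : ℤ) (hij : j ≠ i) : bump x i c j = x j := by
  simp [bump, Function.update_apply, hij]

lemma bump_grid {n : ℕ} {x : Fin 3 → ℤ} {i : Fin 3} {c d : ℕ} (hcd : c ≤ d)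
    (hx : inGrid3 n x) (hxd : inGrid3 n (bump x i (d : ℤ))) :
    inGrid3 n (bump x i (c : ℤ)) := by
  intro j
  by_cases hj : j = i
  · subst hj
    have h1 := (hx j).1
    have h2 := hxd j
    rw [bump_apply_self] at h2 ⊢
    omega
  · rw [bump_apply_ne _ _ hj]
    exact hx j

lemma slide (n : ℕ) (f : (Fin 3 → ℤ) → (Fin 3 → ℤ))
    (hnonexp : ∀ x y, inGrid3 n x → inGrid3 n y → linf3 (f x) (f y) ≤ linf3 x y)
    (x : Fin 3 → ℤ) (i : Fin 3) (c d : ℕ) (hcd : c ≤ d)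
    (hx : inGrid3 n x) (hxd : inGrid3 n (bump x i (d : ℤ)))
    (hfd : x i + (d : ℤ) ≤ f (bump x i (d : ℤ)) i) :
    x i + (c : ℤ) ≤ f (bump x i (c : ℤ)) i := by
  have hxc := bump_grid hcd hx hxd
  have hlin : linf3 (bump x i (c:ℤ)) (bump x i (d:ℤ)) ≤ d - c := by
    apply Finset.sup_le
    intro j _
    by_cases hj : j = i
    · subst hj; rw [bump_apply_self, bump_apply_self]; omega
    · rw [bump_apply_ne _ _ hj, bump_apply_ne _ _ hj]; omega
  have h1 := hnonexp _ _ hxc hxd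
  have h2 : ((f (bump x i (c:ℤ)) i - f (bump x i (d:ℤ)) i).natAbs) ≤
      linf3 (f (bump x i (c:ℤ))) (f (bump x i (d:ℤ))) :=
    Finset.le_sup (f := fun j => (f (bump x i (c:ℤ)) j - f (bump x i (d:ℤ)) j).natAbs)
      (Finset.mem_univ i)
  omega

theorem criticalBox_subset_up' (n : ℕ) (hn : 1 ≤ n)
    (f : (Fin 3 → ℤ) → (Fin 3 → ℤ))
    (hrange : ∀ x, inGrid3 n x → inGrid3 n (f x))
    (hmono : ∀ x y, inGrid3 n x → inGrid3 n y → x ≤ y → f x ≤ f y)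
    (hnonexp : ∀ x y, inGrid3 n x → inGrid3 n y → linf3 (f x) (f y) ≤ linf3 x y)
    (x : Fin 3 → ℤ) (h w : ℕ)
    (hxG : inGrid3 n x) (hxf : x ≤ f x)
    (hwG : inGrid3 n (bump x 0 (w : ℤ)))
    (hfw : x 0 + (w : ℤ) ≤ f (bump x 0 (w : ℤ)) 0)
    (hhG : inGrid3 n (bump x 1 (h : ℤ)))
    (hfh : x 1 + (h : ℤ) ≤ f (bump x 1 (h : ℤ)) 1)
    (a b : ℕ) (ha : a ≤ w) (hb : b ≤ h) :
    inGrid3 n (bump (bump x 0 (a : ℤ)) 1 (b : ℤ)) ∧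
    bump (bump x 0 (a : ℤ)) 1 (b : ℤ) ≤ f (bump (bump x 0 (a : ℤ)) 1 (b : ℤ)) := by
  set y := bump (bump x 0 (a:ℤ)) 1 (b:ℤ) with hy
  have hy0 : y 0 = x 0 + a := by simp [hy, bump, Function.update_apply]
  have hy1 : y 1 = (bump x 0 (a:ℤ)) 1 + b := bump_apply_self _ _ _
  have hy1' : y 1 = x 1 + b := by rw [hy1, bump_apply_ne]; decide
  have hy2 : y 2 = x 2 := by
    rw [hy, bump_apply_ne _ _ (by decide), bump_apply_ne _ _ (by decide)]
  have hyG : inGrid3 n y := by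
    intro j
    fin_cases j
    · show 1 ≤ y 0 ∧ y 0 ≤ (n:ℤ)
      rw [hy0]
      have := (hxG 0).1
      have := (hwG 0)
      rw [bump_apply_self] at this
      omega
    · show 1 ≤ y 1 ∧ y 1 ≤ (n:ℤ)
      rw [hy1']
      have := (hxG 1).1
      have := (hhG 1)
      rw [bump_apply_self] at this
      omega
    · show 1 ≤ y 2 ∧ y 2 ≤ (n:ℤ)
      rw [hy2]; exact hxG 2
  refine ⟨hyG, ?_⟩
  have haG : inGrid3 n (bump x 0 (a:ℤ)) := bump_grid ha hxG hwG
  have hbG : inGrid3 n (bump x 1 (b:ℤ)) := bump_grid hb hxG hhG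
  have hfa : x 0 + (a:ℤ) ≤ f (bump x 0 (a:ℤ)) 0 := slide n f hnonexp x 0 a w ha hxG hwG hfw
  have hfb : x 1 + (b:ℤ) ≤ f (bump x 1 (b:ℤ)) 1 := slide n f hnonexp x 1 b h hb hxG hhG hfh
  have hale : bump x 0 (a:ℤ) ≤ y := by
    intro j
    fin_cases j
    · show bump x 0 (a:ℤ) 0 ≤ y 0
      rw [hy0, bump_apply_self]
    · show bump x 0 (a:ℤ) 1 ≤ y 1
      rw [hy1', bump_apply_ne _ _ (by decide)]; omega
    · show bump x 0 (a:ℤ) 2 ≤ y 2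
      rw [hy2, bump_apply_ne _ _ (by decide)]
  have hble : bump x 1 (b:ℤ) ≤ y := by
    intro j
    fin_cases j
    · show bump x 1 (b:ℤ) 0 ≤ y 0
      rw [hy0, bump_apply_ne _ _ (by decide)]; omega
    · show bump x 1 (b:ℤ) 1 ≤ y 1
      rw [hy1', bump_apply_self]
    · show bump x 1 (b:ℤ) 2 ≤ y 2
      rw [hy2, bump_apply_ne _ _ (by decide)]
  have hxle : x ≤ y := by
    intro j
    fin_cases j
    · show x 0 ≤ y 0
      rw [hy0]; omega
    · show x 1 ≤ y 1
      rw [hy1']; omega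
    · show x 2 ≤ y 2
      rw [hy2]
  have h1 := hmono _ _ haG hyG hale 0
  have h2 := hmono _ _ hbG hyG hble 1
  have h3 := hmono _ _ hxG hyG hxle 2
  intro j
  fin_cases j
  · show y 0 ≤ f y 0
    rw [hy0]; exact le_trans hfa h1
  · show y 1 ≤ f y 1
    rw [hy1']; exact le_trans hfb h2
  · show y 2 ≤ f y 2
    rw [hy2]; exact le_trans (hxf 2) h3

/-- Every point of a critical box lies in the up-set `Up(f)`. -/
theorem criticalBox_subset_up (n : ℕ) (hn : 1 ≤ n)
    (f : (Fin 3 → ℤ) → (Fin 3 → ℤ))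
    (hrange : ∀ x, inGrid3 n x → inGrid3 n (f x))
    (hmono : ∀ x y, inGrid3 n x → inGrid3 n y → x ≤ y → f x ≤ f y)
    (hnonexp : ∀ x y, inGrid3 n x → inGrid3 n y → linf3 (f x) (f y) ≤ linf3 x y)
    (x : Fin 3 → ℤ) (h w : ℕ)
    (hcb : IsCriticalBox n f x h w)
    (a b : ℕ) (ha : a ≤ w) (hb : b ≤ h) :
    inGrid3 n (bump (bump x 0 (a : ℤ)) 1 (b : ℤ)) ∧
    bump (bump x 0 (a : ℤ)) 1 (b : ℤ) ≤ f (bump (bump x 0 (a : ℤ)) 1 (b : ℤ)) := by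

  obtain ⟨hxG, hxf, hwG, -, hfw, -, hhG, -, hfh, -, -⟩ := hcb
  exact criticalBox_subset_up' n hn f hrange hmono hnonexp x h w hxG hxf hwG hfw hhG hfh a b ha hb
end

section
/- Existence of an almost square critical box: let G = {1,…,n}^3 and let f : G → G be monotone and non-expansive on G, and suppose all boundary points move strictly inward, i.e., for every x ∈ G and every coordinate i, x_i = 1 implies f_i(x) > x_i and x_i = n implies f_i(x) < x_i. Fix c with 1 ≤ c ≤ n and let s = {z ∈ G : z_3 = c}. If there exists a point p ∈ s with p ≤ f(p) (i.e., Up(f) ∩ s is non-empty), then there exists a critical box (x, h, w) with x ∈ s and |h − w| ≤ 1. -/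
lemma bump_apply (x : Fin 3 → ℤ) (i : Fin 3) (a : ℤ) (l : Fin 3) :
    bump x i a l = if l = i then x i + a else x l := by
  simp [bump, Function.update_apply]

lemma linf3_le' {x y : Fin 3 → ℤ} {k : ℕ} (h : ∀ l, (x l - y l).natAbs ≤ k) :
    linf3 x y ≤ k := Finset.sup_le fun l _ => h l

lemma coord_le_linf3 (x y : Fin 3 → ℤ) (l : Fin 3) :
    (x l - y l).natAbs ≤ linf3 x y := by
  exact Finset.le_sup (f := fun i => (x i - y i).natAbs) (Finset.mem_univ l)

structure Hyp (n : ℕ) (f : (Fin 3 → ℤ) → (Fin 3 → ℤ)) : Prop where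
  mono : ∀ x y, inGrid3 n x → inGrid3 n y → x ≤ y → f x ≤ f y
  nonexp : ∀ x y, inGrid3 n x → inGrid3 n y → linf3 (f x) (f y) ≤ linf3 x y
  bdry : ∀ x, inGrid3 n x → ∀ i : Fin 3,
    (x i = 1 → x i < f x i) ∧ (x i = (n : ℤ) → f x i < x i)

lemma Hyp.coord {n : ℕ} {f : (Fin 3 → ℤ) → (Fin 3 → ℤ)} (H : Hyp n f)
    {x y : Fin 3 → ℤ} (hx : inGrid3 n x) (hy : inGrid3 n y)
    {k : ℕ} (hk : ∀ l, (x l - y l).natAbs ≤ k) (l : Fin 3) :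
    (f x l - f y l).natAbs ≤ k :=
  le_trans (coord_le_linf3 _ _ l) (le_trans (H.nonexp x y hx hy) (linf3_le' hk))

def Sset (n : ℕ) (f : (Fin 3 → ℤ) → (Fin 3 → ℤ)) (c : ℤ) (x : Fin 3 → ℤ) : Prop :=
  inGrid3 n x ∧ x 2 = c ∧ x ≤ f x

def Thr (n : ℕ) (f : (Fin 3 → ℤ) → (Fin 3 → ℤ)) (i : Fin 3) (x : Fin 3 → ℤ) (w : ℕ) : Prop :=
  inGrid3 n (bump x i (w : ℤ)) ∧ inGrid3 n (bump x i ((w : ℤ) + 1)) ∧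
  x i + (w : ℤ) ≤ f (bump x i (w : ℤ)) i ∧ f (bump x i ((w : ℤ) + 1)) i < x i + (w : ℤ) + 1

def Gd (n : ℕ) (f : (Fin 3 → ℤ) → (Fin 3 → ℤ)) (c : ℤ) (x : Fin 3 → ℤ) : Prop :=
  Sset n f c x ∧
    (x 0 = 1 ∨ x 1 = 1 ∨ ¬ Sset n f c (bump (bump x 0 (-1)) 1 (-1)))


lemma bump_zero (x : Fin 3 → ℤ) (i : Fin 3) : bump x i 0 = x := by
  funext l; rw [bump_apply]; split_ifs with hl
  · subst hl; ring
  · rfl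

lemma exists_thr {n : ℕ} {f : (Fin 3 → ℤ) → (Fin 3 → ℤ)} {c : ℤ} (H : Hyp n f)
    {x : Fin 3 → ℤ} (hx : Sset n f c x) (i : Fin 3) :
    ∃ w, Thr n f i x w := by
  classical
  obtain ⟨hg, hc, hle⟩ := hx
  have hxi1 : 1 ≤ x i := (hg i).1
  have hxin : x i < n := by
    rcases lt_or_eq_of_le (hg i).2 with hlt | heq
    · exact hlt
    · exact absurd ((H.bdry x hg i).2 heq) (not_lt.2 (hle i))
  set Q : ℕ → Prop := fun j =>
    x i + (j : ℤ) + 1 ≤ n ∧ f (bump x i ((j : ℤ) + 1)) i < x i + (j : ℤ) + 1 with hQdef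
  have hex : ∃ j, Q j := by
    refine ⟨(n - x i - 1).toNat, ?_⟩
    have hj : (((n : ℤ) - x i - 1).toNat : ℤ) = (n : ℤ) - x i - 1 :=
      Int.toNat_of_nonneg (by omega)
    have hPg : inGrid3 n (bump x i (((((n:ℤ) - x i - 1).toNat : ℕ) : ℤ) + 1)) := by
      intro l; rw [bump_apply]; split_ifs with hl
      · constructor <;> omega
      · exact hg l
    have hPi : bump x i (((((n:ℤ) - x i - 1).toNat : ℕ) : ℤ) + 1) i = (n : ℤ) := by
      rw [bump_apply, if_pos rfl]; omega
    refine ⟨by omega, ?_⟩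
    have := (H.bdry _ hPg i).2 hPi
    rw [hPi] at this
    omega
  obtain ⟨w, hQ0, hmin⟩ : ∃ w, Q w ∧ ∀ m, m < w → ¬ Q m :=
    ⟨Nat.find hex, Nat.find_spec hex, fun m hm => Nat.find_min hex hm⟩
  obtain ⟨hQn, hQf⟩ := hQ0
  have hlow : x i + (w : ℤ) ≤ f (bump x i (w : ℤ)) i := by
    rcases Nat.eq_zero_or_pos w with h0 | hpos
    · rw [h0]
      push_cast
      rw [bump_zero]
      simpa using hle i
    · have hnk : ¬ Q (w - 1) := hmin (w - 1) (by omega)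
      rw [hQdef] at hnk
      have h1 : x i + ((w - 1 : ℕ) : ℤ) + 1 ≤ n := by omega
      have h2 : x i + ((w - 1 : ℕ) : ℤ) + 1 ≤ f (bump x i (((w - 1 : ℕ) : ℤ) + 1)) i := by
        by_contra hcon
        push_neg at hcon
        exact hnk ⟨h1, hcon⟩
      have hc1 : ((w - 1 : ℕ) : ℤ) + 1 = (w : ℤ) := by omega
      have ecast : bump x i (((w - 1 : ℕ) : ℤ) + 1) = bump x i (w : ℤ) := by
        rw [hc1]
      rw [ecast] at h2
      omega
  refine ⟨w, ?_, ?_, hlow, hQf⟩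
  · intro l; rw [bump_apply]; split_ifs with hl
    · constructor <;> omega
    · exact hg l
  · intro l; rw [bump_apply]; split_ifs with hl
    · constructor <;> omega
    · exact hg l

lemma exists_good {n : ℕ} {f : (Fin 3 → ℤ) → (Fin 3 → ℤ)} {c : ℤ} (H : Hyp n f)
    {p : Fin 3 → ℤ} (hp : Sset n f c p) : ∃ x, Gd n f c x := by
  suffices hmain : ∀ k : ℕ, ∀ x, Sset n f c x → (x 0 + x 1).toNat ≤ k → ∃ y, Gd n f c y from
    hmain (p 0 + p 1).toNat p hp le_rfl
  intro k
  induction k with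
  | zero =>
    intro x hx hk
    have h0 := (hx.1 0).1
    have h1 := (hx.1 1).1
    omega
  | succ k ih =>
    intro x hx hk
    by_cases hgd : x 0 = 1 ∨ x 1 = 1 ∨ ¬ Sset n f c (bump (bump x 0 (-1)) 1 (-1))
    · exact ⟨x, hx, hgd⟩
    · push_neg at hgd
      obtain ⟨h0, h1, hS⟩ := hgd
      refine ih _ hS ?_
      have e0 : bump (bump x 0 (-1)) 1 (-1) 0 = x 0 + (-1) := by simp [bump_apply]
      have e1 : bump (bump x 0 (-1)) 1 (-1) 1 = x 1 + (-1) := by simp [bump_apply]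
      have hb0 := (hx.1 0).1
      have hb1 := (hx.1 1).1
      rw [e0, e1]
      omega

lemma notS_coord2 {n : ℕ} {f : (Fin 3 → ℤ) → (Fin 3 → ℤ)} {c : ℤ} (H : Hyp n f)
    {x Y : Fin 3 → ℤ} (hx : Sset n f c x) (hYg : inGrid3 n Y) (hY2 : Y 2 = x 2)
    (hco : ∀ l, l ≠ 2 → Y l = x l - 1)
    (hnY : ¬ Sset n f c Y) : f Y 2 < Y 2 := by
  have hd : ∀ l, (x l - Y l).natAbs ≤ 1 := by
    intro l
    by_cases hl : l = 2
    · subst hl; rw [hY2]; simp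
    · have := hco l hl; omega
  have hfd := H.coord hx.1 hYg hd
  have hxle := hx.2.2
  by_contra hcon
  push_neg at hcon
  apply hnY
  refine ⟨hYg, by rw [hY2, hx.2.1], ?_⟩
  rw [Pi.le_def]
  intro l
  by_cases hl : l = 2
  · subst hl; exact hcon
  · have h1 := hfd l
    have h2 : x l ≤ f x l := hxle l
    have h3 := hco l hl
    omega

lemma crit_of_gd {n : ℕ} {f : (Fin 3 → ℤ) → (Fin 3 → ℤ)} {c : ℤ} (H : Hyp n f)
    {x : Fin 3 → ℤ} {w h : ℕ} (hg : Gd n f c x)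
    (hw : Thr n f 0 x w) (hh : Thr n f 1 x h) : IsCriticalBox n f x h w := by
  obtain ⟨⟨hxg, hx2, hxle⟩, hdis⟩ := hg
  refine ⟨hxg, hxle, hw.1, hw.2.1, hw.2.2.1, hw.2.2.2, hh.1, hh.2.1, hh.2.2.1, hh.2.2.2, ?_⟩
  by_cases h0 : x 0 = 1
  · exact Or.inl h0
  by_cases h1 : x 1 = 1
  · exact Or.inr (Or.inl h1)
  rcases hdis with hd | hd | hns
  · exact Or.inl hd
  · exact Or.inr (Or.inl hd)
  refine Or.inr (Or.inr ?_)
  have htri : ∀ l : Fin 3, l = 0 ∨ l = 1 ∨ l = 2 := by decide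
  have e0 : bump (bump x 0 (-1)) 1 (-1) 0 = x 0 - 1 := by simp [bump_apply]; ring
  have e1 : bump (bump x 0 (-1)) 1 (-1) 1 = x 1 - 1 := by simp [bump_apply]; ring
  have e2 : bump (bump x 0 (-1)) 1 (-1) 2 = x 2 := by simp [bump_apply]
  have hb0 := hxg 0
  have hb1 := hxg 1
  have hb2 := hxg 2
  have hYg : inGrid3 n (bump (bump x 0 (-1)) 1 (-1)) := by
    intro l
    rcases htri l with rfl | rfl | rfl
    · rw [e0]; constructor <;> omega
    · rw [e1]; constructor <;> omega
    · rw [e2]; constructor <;> omega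
  have hco : ∀ l, l ≠ 2 → bump (bump x 0 (-1)) 1 (-1) l = x l - 1 := by
    intro l hl
    rcases htri l with rfl | rfl | rfl
    · exact e0
    · exact e1
    · exact absurd rfl hl
  have := notS_coord2 H ⟨hxg, hx2, hxle⟩ hYg e2 hco hns
  rw [e2] at this
  exact this

lemma step {n : ℕ} {f : (Fin 3 → ℤ) → (Fin 3 → ℤ)} {c : ℤ} (H : Hyp n f)
    {i j : Fin 3} (hij : i = 0 ∧ j = 1 ∨ i = 1 ∧ j = 0)
    {x : Fin 3 → ℤ} {w h : ℕ} (hg : Gd n f c x) (hw : Thr n f i x w) (hh : Thr n f j x h)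
    (hwh : h + 2 ≤ w) :
    ∃ x' w' h', Gd n f c x' ∧ Thr n f i x' w' ∧ Thr n f j x' h' ∧
      h ≤ h' ∧ h' ≤ h + 1 ∧ w ≤ w' + 1 ∧ w' ≤ w ∧ w' + h < w + h' := by
  have hij' : i ≠ j := by rcases hij with ⟨rfl, rfl⟩ | ⟨rfl, rfl⟩ <;> decide
  have hji : j ≠ i := Ne.symm hij'
  have hi2 : i ≠ 2 := by rcases hij with ⟨rfl, rfl⟩ | ⟨rfl, rfl⟩ <;> decide
  have hj2 : j ≠ 2 := by rcases hij with ⟨rfl, rfl⟩ | ⟨rfl, rfl⟩ <;> decide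
  have h2i : (2 : Fin 3) ≠ i := Ne.symm hi2
  have h2j : (2 : Fin 3) ≠ j := Ne.symm hj2
  have htri : ∀ l : Fin 3, l = i ∨ l = j ∨ l = 2 := by
    rcases hij with ⟨rfl, rfl⟩ | ⟨rfl, rfl⟩ <;> decide
  obtain ⟨⟨hxg, hx2, hxle⟩, hdis⟩ := hg
  obtain ⟨hwG, hwG1, hwL, hwU⟩ := hw
  obtain ⟨hhG, hhG1, hhL, hhU⟩ := hh
  have hBi : x i + (w : ℤ) + 1 ≤ n := by
    have := (hwG1 i).2
    rw [bump_apply, if_pos rfl] at this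
    omega
  have hBj : x j + (h : ℤ) + 1 ≤ n := by
    have := (hhG1 j).2
    rw [bump_apply, if_pos rfl] at this
    omega
  have hx_i := hxg i
  have hx_j := hxg j
  have hx_2 := hxg 2
  have hxle_i : x i ≤ f x i := hxle i
  have hxle_j : x j ≤ f x j := hxle j
  have hxle_2 : x 2 ≤ f x 2 := hxle 2
  by_cases hA : x j = 1 ∨ ¬ Sset n f c (bump x j (-1))
  case pos =>
    -- move to x + e_i
    have hx'g : inGrid3 n (bump x i 1) := by
      intro l
      rcases htri l with rfl | rfl | rfl <;>
        simp [bump_apply, hij', hji, hi2, hj2, h2i, h2j] <;> omega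
    have hx'i : bump x i 1 i = x i + 1 := by rw [bump_apply, if_pos rfl]
    have hx'j : bump x i 1 j = x j := by rw [bump_apply, if_neg hji]
    have hx'2 : bump x i 1 2 = c := by rw [bump_apply, if_neg h2i]; exact hx2
    have hxlex' : x ≤ bump x i 1 := by
      rw [Pi.le_def]; intro l
      rcases htri l with rfl | rfl | rfl <;>
        simp [bump_apply, hij', hji, hi2, hj2, h2i, h2j] <;> omega
    have hm_j : f x j ≤ f (bump x i 1) j := H.mono x (bump x i 1) hxg hx'g hxlex' j
    have hm_2 : f x 2 ≤ f (bump x i 1) 2 := H.mono x (bump x i 1) hxg hx'g hxlex' 2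
    have hkk : ∀ l, ((bump x i 1) l - (bump x i (w : ℤ)) l).natAbs ≤ w - 1 := by
      intro l
      rcases htri l with rfl | rfl | rfl <;>
        simp [bump_apply, hij', hji, hi2, hj2, h2i, h2j] <;> omega
    have hfx'i := H.coord hx'g hwG hkk i
    have hx'le : bump x i 1 ≤ f (bump x i 1) := by
      rw [Pi.le_def]; intro l
      rcases htri l with rfl | rfl | rfl <;>
        simp [bump_apply, hij', hji, hi2, hj2, h2i, h2j] <;> omega
    have hSx' : Sset n f c (bump x i 1) := ⟨hx'g, hx'2, hx'le⟩
    have hgd' : Gd n f c (bump x i 1) := by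
      refine ⟨hSx', ?_⟩
      have hback : bump (bump (bump x i 1) 0 (-1)) 1 (-1) = bump x j (-1) := by
        rcases hij with ⟨rfl, rfl⟩ | ⟨rfl, rfl⟩ <;>
          (funext l; rcases htri l with rfl | rfl | rfl <;> simp [bump_apply] <;> omega)
      rcases hA with hA1 | hA2
      · rcases hij with ⟨rfl, rfl⟩ | ⟨rfl, rfl⟩
        · exact Or.inr (Or.inl (by rw [hx'j]; exact hA1))
        · exact Or.inl (by rw [hx'j]; exact hA1)
      · exact Or.inr (Or.inr (by rw [hback]; exact hA2))
    have eW : bump (bump x i 1) i ((w - 1 : ℕ) : ℤ) = bump x i (w : ℤ) := by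
      funext l; simp [bump_apply]; split_ifs <;> omega
    have eW1 : bump (bump x i 1) i (((w - 1 : ℕ) : ℤ) + 1) = bump x i ((w : ℤ) + 1) := by
      funext l; simp [bump_apply]; split_ifs <;> omega
    have hThrW : Thr n f i (bump x i 1) (w - 1) := by
      refine ⟨?_, ?_, ?_, ?_⟩
      · rw [eW]; exact hwG
      · rw [eW1]; exact hwG1
      · rw [eW, hx'i]; omega
      · rw [eW1, hx'i]; omega
    have gx'h : inGrid3 n (bump (bump x i 1) j (h : ℤ)) := by
      intro l
      rcases htri l with rfl | rfl | rfl <;>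
        simp [bump_apply, hij', hji, hi2, hj2, h2i, h2j] <;> omega
    have gx'h1 : inGrid3 n (bump (bump x i 1) j ((h : ℤ) + 1)) := by
      intro l
      rcases htri l with rfl | rfl | rfl <;>
        simp [bump_apply, hij', hji, hi2, hj2, h2i, h2j] <;> omega
    by_cases hB : f (bump (bump x i 1) j ((h : ℤ) + 1)) j < bump x i 1 j + (h : ℤ) + 1
    · -- h' = h
      have hcmp : bump x j (h : ℤ) ≤ bump (bump x i 1) j (h : ℤ) := by
        rw [Pi.le_def]; intro l
        rcases htri l with rfl | rfl | rfl <;>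
          simp [bump_apply, hij', hji, hi2, hj2, h2i, h2j] <;> omega
      have hm2 : f (bump x j (h : ℤ)) j ≤ f (bump (bump x i 1) j (h : ℤ)) j :=
        H.mono _ _ hhG gx'h hcmp j
      exact ⟨bump x i 1, w - 1, h, hgd', hThrW,
        ⟨gx'h, gx'h1, by rw [hx'j]; omega, hB⟩,
        by omega, by omega, by omega, by omega, by omega⟩
    · -- h' = h + 1
      push_neg at hB
      have hn2 : x j + (h : ℤ) + 2 ≤ n := by
        by_contra hcon
        have hPj : bump (bump x i 1) j ((h : ℤ) + 1) j = (n : ℤ) := by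
          rw [bump_apply, if_pos rfl, hx'j]; omega
        have := (H.bdry _ gx'h1 j).2 hPj
        rw [hPj] at this
        omega
      have ecast : ((h + 1 : ℕ) : ℤ) = (h : ℤ) + 1 := by push_cast; ring
      have gx'h2 : inGrid3 n (bump (bump x i 1) j ((h : ℤ) + 1 + 1)) := by
        intro l
        rcases htri l with rfl | rfl | rfl <;>
          simp [bump_apply, hij', hji, hi2, hj2, h2i, h2j] <;> omega
      have hk1 : ∀ l,
          ((bump (bump x i 1) j ((h : ℤ) + 1 + 1)) l - (bump x j ((h : ℤ) + 1)) l).natAbs ≤ 1 := by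
        intro l
        rcases htri l with rfl | rfl | rfl <;>
          simp [bump_apply, hij', hji, hi2, hj2, h2i, h2j] <;> omega
      have hcd := H.coord gx'h2 hhG1 hk1 j
      refine ⟨bump x i 1, w - 1, h + 1, hgd', hThrW, ⟨?_, ?_, ?_, ?_⟩,
        by omega, by omega, by omega, by omega, by omega⟩
      · rw [ecast]; exact gx'h1
      · rw [ecast]; exact gx'h2
      · rw [ecast]; omega
      · rw [ecast, hx'j]; omega
  case neg =>
    push_neg at hA
    obtain ⟨hA1, hA2⟩ := hA
    obtain ⟨hzg, hz2, hzle⟩ := hA2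
    have hzj : bump x j (-1) j = x j + (-1) := by rw [bump_apply, if_pos rfl]
    have hzi : bump x j (-1) i = x i := by rw [bump_apply, if_neg hij']
    have hgd' : Gd n f c (bump x j (-1)) := by
      refine ⟨⟨hzg, hz2, hzle⟩, ?_⟩
      by_cases hxi1 : x i = 1
      · rcases hij with ⟨rfl, rfl⟩ | ⟨rfl, rfl⟩
        · exact Or.inl (by rw [hzi]; exact hxi1)
        · exact Or.inr (Or.inl (by rw [hzi]; exact hxi1))
      by_cases hxj2 : x j = 2
      · rcases hij with ⟨rfl, rfl⟩ | ⟨rfl, rfl⟩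
        · exact Or.inr (Or.inl (by rw [hzj]; omega))
        · exact Or.inl (by rw [hzj]; omega)
      refine Or.inr (Or.inr ?_)
      have hdis' : ¬ Sset n f c (bump (bump x i (-1)) j (-1)) := by
        have hYe : bump (bump x i (-1)) j (-1) = bump (bump x 0 (-1)) 1 (-1) := by
          rcases hij with ⟨rfl, rfl⟩ | ⟨rfl, rfl⟩
          · rfl
          · funext l; rcases htri l with rfl | rfl | rfl <;> simp [bump_apply] <;> omega
        rcases hdis with hd | hd | hd
        · exfalso; rcases hij with ⟨rfl, rfl⟩ | ⟨rfl, rfl⟩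
          · exact hxi1 hd
          · exact hA1 hd
        · exfalso; rcases hij with ⟨rfl, rfl⟩ | ⟨rfl, rfl⟩
          · exact hA1 hd
          · exact hxi1 hd
        · rw [hYe]; exact hd
      have hYco : ∀ l, l ≠ 2 → bump (bump x i (-1)) j (-1) l = x l - 1 := by
        intro l hl
        rcases htri l with rfl | rfl | rfl
        · simp [bump_apply, hij', hji]; omega
        · simp [bump_apply, hij', hji]; omega
        · exact absurd rfl hl
      have hY2 : bump (bump x i (-1)) j (-1) 2 = x 2 := by
        simp [bump_apply, h2i, h2j]
      have hYg : inGrid3 n (bump (bump x i (-1)) j (-1)) := by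
        intro l
        rcases htri l with rfl | rfl | rfl <;>
          simp [bump_apply, hij', hji, hi2, hj2, h2i, h2j] <;> omega
      have hfY2 := notS_coord2 H ⟨hxg, hx2, hxle⟩ hYg hY2 hYco hdis'
      have hY'e : bump (bump (bump x j (-1)) 0 (-1)) 1 (-1)
          = bump (bump (bump x i (-1)) j (-1)) j (-1) := by
        rcases hij with ⟨rfl, rfl⟩ | ⟨rfl, rfl⟩ <;>
          (funext l; rcases htri l with rfl | rfl | rfl <;> simp [bump_apply] <;> omega)
      rw [hY'e]
      intro hSY'
      have hY'le : bump (bump (bump x i (-1)) j (-1)) j (-1) ≤ bump (bump x i (-1)) j (-1) := by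
        rw [Pi.le_def]; intro l
        rcases htri l with rfl | rfl | rfl <;>
          simp [bump_apply, hij', hji, hi2, hj2, h2i, h2j] <;> omega
      have hm2 : f (bump (bump (bump x i (-1)) j (-1)) j (-1)) 2
          ≤ f (bump (bump x i (-1)) j (-1)) 2 :=
        H.mono _ _ hSY'.1 hYg hY'le 2
      have hc2 : c ≤ f (bump (bump (bump x i (-1)) j (-1)) j (-1)) 2 := by
        have h3 : bump (bump (bump x i (-1)) j (-1)) j (-1) 2
            ≤ f (bump (bump (bump x i (-1)) j (-1)) j (-1)) 2 := hSY'.2.2 2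
        rw [hSY'.2.1] at h3
        exact h3
      rw [hY2, hx2] at hfY2
      omega
    have eZ1 : bump (bump x j (-1)) j ((h + 1 : ℕ) : ℤ) = bump x j (h : ℤ) := by
      funext l; simp [bump_apply]; split_ifs <;> omega
    have eZ2 : bump (bump x j (-1)) j (((h + 1 : ℕ) : ℤ) + 1) = bump x j ((h : ℤ) + 1) := by
      funext l; simp [bump_apply]; split_ifs <;> omega
    have hThrH : Thr n f j (bump x j (-1)) (h + 1) := by
      refine ⟨?_, ?_, ?_, ?_⟩
      · rw [eZ1]; exact hhG
      · rw [eZ2]; exact hhG1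
      · rw [eZ1, hzj]; push_cast; omega
      · rw [eZ2, hzj]; push_cast; omega
    by_cases hC : bump x j (-1) i + (w : ℤ) ≤ f (bump (bump x j (-1)) i (w : ℤ)) i
    · -- w' = w
      have gz1 : inGrid3 n (bump (bump x j (-1)) i (w : ℤ)) := by
        intro l
        rcases htri l with rfl | rfl | rfl <;>
          simp [bump_apply, hij', hji, hi2, hj2, h2i, h2j] <;> omega
      have gz2 : inGrid3 n (bump (bump x j (-1)) i ((w : ℤ) + 1)) := by
        intro l
        rcases htri l with rfl | rfl | rfl <;>
          simp [bump_apply, hij', hji, hi2, hj2, h2i, h2j] <;> omega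
      have hcmp : bump (bump x j (-1)) i ((w : ℤ) + 1) ≤ bump x i ((w : ℤ) + 1) := by
        rw [Pi.le_def]; intro l
        rcases htri l with rfl | rfl | rfl <;>
          simp [bump_apply, hij', hji, hi2, hj2, h2i, h2j] <;> omega
      have hm2 : f (bump (bump x j (-1)) i ((w : ℤ) + 1)) i ≤ f (bump x i ((w : ℤ) + 1)) i :=
        H.mono _ _ gz2 hwG1 hcmp i
      exact ⟨bump x j (-1), w, h + 1, hgd', ⟨gz1, gz2, hC, by omega⟩, hThrH,
        by omega, by omega, by omega, by omega, by omega⟩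
    · -- w' = w - 1
      push_neg at hC
      have gz0 : inGrid3 n (bump (bump x j (-1)) i ((w - 1 : ℕ) : ℤ)) := by
        intro l
        rcases htri l with rfl | rfl | rfl <;>
          simp [bump_apply, hij', hji, hi2, hj2, h2i, h2j] <;> omega
      have eC : bump (bump x j (-1)) i (((w - 1 : ℕ) : ℤ) + 1) = bump (bump x j (-1)) i (w : ℤ) := by
        have hcc : ((w - 1 : ℕ) : ℤ) + 1 = (w : ℤ) := by omega
        rw [hcc]
      have gz1 : inGrid3 n (bump (bump x j (-1)) i (((w - 1 : ℕ) : ℤ) + 1)) := by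
        rw [eC]
        intro l
        rcases htri l with rfl | rfl | rfl <;>
          simp [bump_apply, hij', hji, hi2, hj2, h2i, h2j] <;> omega
      have hk1 : ∀ l,
          ((bump (bump x j (-1)) i ((w - 1 : ℕ) : ℤ)) l - (bump x i (w : ℤ)) l).natAbs ≤ 1 := by
        intro l
        rcases htri l with rfl | rfl | rfl <;>
          simp [bump_apply, hij', hji, hi2, hj2, h2i, h2j] <;> omega
      have hcd := H.coord gz0 hwG hk1 i
      refine ⟨bump x j (-1), w - 1, h + 1, hgd', ⟨gz0, gz1, ?_, ?_⟩, hThrH,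
        by omega, by omega, by omega, by omega, by omega⟩
      · omega
      · rw [eC]; omega

lemma main_loop {n : ℕ} {f : (Fin 3 → ℤ) → (Fin 3 → ℤ)} {c : ℤ} (H : Hyp n f) :
    ∀ m : ℕ, ∀ x : Fin 3 → ℤ, ∀ w h : ℕ, Gd n f c x → Thr n f 0 x w → Thr n f 1 x h →
      (w - h) + (h - w) ≤ m →
      ∃ (x' : Fin 3 → ℤ) (w' h' : ℕ), Gd n f c x' ∧ Thr n f 0 x' w' ∧ Thr n f 1 x' h' ∧
        h' ≤ w' + 1 ∧ w' ≤ h' + 1 := by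
  intro m
  induction m with
  | zero =>
    intro x w h hg hw hh hm
    exact ⟨x, w, h, hg, hw, hh, by omega, by omega⟩
  | succ m ih =>
    intro x w h hg hw hh hm
    by_cases hd : h ≤ w + 1 ∧ w ≤ h + 1
    · exact ⟨x, w, h, hg, hw, hh, hd.1, hd.2⟩
    · rcases Nat.lt_or_ge (h + 1) w with hlt | hge
      · obtain ⟨x', w', h', hg', hw', hh', b1, b2, b3, b4, b5⟩ :=
          step H (Or.inl ⟨rfl, rfl⟩) hg hw hh (by omega)
        exact ih x' w' h' hg' hw' hh' (by omega)
      · have hlt2 : w + 2 ≤ h := by omega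
        obtain ⟨x', h', w', hg', hh', hw', b1, b2, b3, b4, b5⟩ :=
          step H (Or.inr ⟨rfl, rfl⟩) hg hh hw (by omega)
        exact ih x' w' h' hg' hw' hh' (by omega)

/-- If the up-set meets the slice `{z : z_3 = c}`, then there exists an
almost square critical box (`|h − w| ≤ 1`) in that slice. -/
theorem almost_square_criticalBox_exists (n : ℕ) (hn : 1 ≤ n)
    (f : (Fin 3 → ℤ) → (Fin 3 → ℤ))
    (hrange : ∀ x, inGrid3 n x → inGrid3 n (f x))
    (hmono : ∀ x y, inGrid3 n x → inGrid3 n y → x ≤ y → f x ≤ f y)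
    (hnonexp : ∀ x y, inGrid3 n x → inGrid3 n y → linf3 (f x) (f y) ≤ linf3 x y)
    (hbdry : ∀ x, inGrid3 n x → ∀ i : Fin 3,
      (x i = 1 → x i < f x i) ∧ (x i = (n : ℤ) → f x i < x i))
    (c : ℤ) (hc1 : 1 ≤ c) (hcn : c ≤ (n : ℤ))
    (hup : ∃ p, inGrid3 n p ∧ p 2 = c ∧ p ≤ f p) :
    ∃ (x : Fin 3 → ℤ) (h w : ℕ), IsCriticalBox n f x h w ∧ x 2 = c ∧
      h ≤ w + 1 ∧ w ≤ h + 1 := by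
  obtain ⟨p, hpg, hp2, hple⟩ := hup
  have H : Hyp n f := ⟨hmono, hnonexp, hbdry⟩
  have hpS : Sset n f c p := ⟨hpg, hp2, hple⟩
  obtain ⟨x, hgx⟩ := exists_good H hpS
  obtain ⟨w, hw⟩ := exists_thr H hgx.1 0
  obtain ⟨h, hh⟩ := exists_thr H hgx.1 1
  obtain ⟨x', w', h', hg', hw', hh', hb1, hb2⟩ :=
    main_loop H ((w - h) + (h - w)) x w h hgx hw hh le_rfl
  exact ⟨x', h', w', crit_of_gd H hg' hw' hh', hg'.1.2.1, hb1, hb2⟩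
end

section
/- Let G = {1,…,n}^3 and let f : G → G be monotone. Then for every integer c with 1 ≤ c ≤ n, there exists a point p ∈ G with p_3 = c such that p ≤ f(p) or f(p) ≤ p; that is, every two-dimensional slice of the instance meets the up-set or the down-set. -/
/-- Every two-dimensional slice of a monotone instance meets the up-set or
the down-set. -/
theorem slice_meets_up_or_down (n : ℕ) (hn : 1 ≤ n)
    (f : (Fin 3 → ℤ) → (Fin 3 → ℤ))
    (hrange : ∀ x, inGrid3 n x → inGrid3 n (f x))
    (hmono : ∀ x y, inGrid3 n x → inGrid3 n y → x ≤ y → f x ≤ f y)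
    (c : ℤ) (hc1 : 1 ≤ c) (hcn : c ≤ (n : ℤ)) :
    ∃ p, inGrid3 n p ∧ p 2 = c ∧ (p ≤ f p ∨ f p ≤ p) := by
  classical
  have hn' : (1 : ℤ) ≤ (n : ℤ) := by exact_mod_cast hn
  set h : (Fin 3 → ℤ) → (Fin 3 → ℤ) := fun x => Function.update (f x) 2 c with hh
  have hval2 : ∀ x, h x 2 = c := fun x => Function.update_self _ _ _
  have hvalne : ∀ x (i : Fin 3), i ≠ 2 → h x i = f x i :=
    fun x i hi => Function.update_of_ne hi _ _
  have hgridh : ∀ x, inGrid3 n x → inGrid3 n (h x) := by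
    intro x hx i
    by_cases hi : i = 2
    · subst hi; rw [hval2]; exact ⟨hc1, hcn⟩
    · rw [hvalne x i hi]; exact hrange x hx i
  have hmonoh : ∀ x y, inGrid3 n x → inGrid3 n y → x ≤ y → h x ≤ h y := by
    intro x y hx hy hxy i
    by_cases hi : i = 2
    · subst hi; rw [hval2, hval2]
    · rw [hvalne x i hi, hvalne y i hi]; exact hmono x y hx hy hxy i
  set D : Set (Fin 3 → ℤ) := {x | inGrid3 n x ∧ x 2 = c ∧ h x ≤ x} with hD
  set top : Fin 3 → ℤ := fun i => if i = 2 then c else (n : ℤ) with htop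
  have htopgrid : inGrid3 n top := by
    intro i
    by_cases hi : i = 2 <;> simp only [htop, hi, if_true, if_false]
    · exact ⟨hc1, hcn⟩
    · exact ⟨hn', le_refl _⟩
  have htopD : top ∈ D := by
    refine ⟨htopgrid, by simp [htop], ?_⟩
    intro i
    by_cases hi : i = 2
    · subst hi; rw [hval2]; simp [htop]
    · rw [hvalne top i hi]
      have := (hrange top htopgrid i).2
      simpa [htop, hi] using this
  have hbdd : ∀ i : Fin 3, BddBelow ((fun d => d i) '' D) := by
    intro i
    exact ⟨1, by rintro z ⟨d, hd, rfl⟩; exact (hd.1 i).1⟩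
  have hne : ∀ i : Fin 3, ((fun d => d i) '' D).Nonempty :=
    fun i => ⟨top i, top, htopD, rfl⟩
  set q : Fin 3 → ℤ := fun i => sInf ((fun d => d i) '' D) with hq
  have hqle : ∀ d ∈ D, q ≤ d := by
    intro d hd i
    exact csInf_le (hbdd i) ⟨d, hd, rfl⟩
  have hqgrid : inGrid3 n q := by
    intro i
    constructor
    · exact le_csInf (hne i) (by rintro z ⟨d, hd, rfl⟩; exact (hd.1 i).1)
    · calc q i ≤ top i := hqle top htopD i
        _ ≤ (n : ℤ) := by by_cases hi : i = 2 <;> simp [htop, hi, hcn]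
  have hq2 : q 2 = c := by
    apply le_antisymm
    · have : top 2 = c := by simp [htop]
      calc q 2 ≤ top 2 := hqle top htopD 2
        _ = c := this
    · exact le_csInf (hne 2) (by rintro z ⟨d, hd, rfl⟩; exact hd.2.1.ge)
  have hhq : h q ≤ q := by
    intro i
    apply le_csInf (hne i)
    rintro z ⟨d, hd, rfl⟩
    calc h q i ≤ h d i := hmonoh q d hqgrid hd.1 (hqle d hd) i
      _ ≤ d i := hd.2.2 i
  have hhqD : h q ∈ D := by
    refine ⟨hgridh q hqgrid, hval2 q, ?_⟩
    exact hmonoh (h q) q (hgridh q hqgrid) hqgrid hhq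
  have hfix : h q = q := by
    funext i
    exact le_antisymm (hhq i) (csInf_le (hbdd i) ⟨h q, hhqD, rfl⟩)
  have hfq : ∀ i : Fin 3, i ≠ 2 → f q i = q i := by
    intro i hi
    rw [← hvalne q i hi, hfix]
  refine ⟨q, hqgrid, hq2, ?_⟩
  rcases le_total (f q 2) c with hle | hle
  · right
    intro i
    by_cases hi : i = 2
    · subst hi; rw [hq2]; exact hle
    · rw [hfq i hi]
  · left
    intro i
    by_cases hi : i = 2
    · subst hi; rw [hq2]; exact hle
    · rw [hfq i hi]
end
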